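/- arXiv:1605.00322 — 11 statements merged into one kernel-verified Lean document; each statement's English description precedes it below -/
import Mathlib

section
/- Let n be a natural number and f : ℕ → ℕ → ℝ be submodular on {0,…,n}², i.e., f(a⁺,b⁻) + f(a⁻,b⁺) ≥ f(a⁻,b⁻) + f(a⁺,b⁺) whenever a⁻ ≤ a⁺ ≤ n and b⁻ ≤ b⁺ ≤ n. For b ≤ n let M(b) denote the largest element of the (nonempty, finite) set of minimizers of a ↦ f(a,b) over {0,…,n}. Then M is nondecreasing: b ≤ b' ≤ n implies M(b) ≤ M(b'). -/
/-- For a submodular function on `{0,…,n}²`, the largest best response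
(the largest minimizer of `a ↦ f a b` over `{0,…,n}`) is nondecreasing in `b`. -/
theorem largest_minimizer_monotone (n : ℕ) (f : ℕ → ℕ → ℝ)
    (hsub : ∀ am ap bm bp : ℕ, am ≤ ap → ap ≤ n → bm ≤ bp → bp ≤ n →
      f am bm + f ap bp ≤ f ap bm + f am bp)
    (M : ℕ → ℕ)
    (hMmem : ∀ b, b ≤ n → M b ≤ n)
    (hMmin : ∀ b, b ≤ n → ∀ a, a ≤ n → f (M b) b ≤ f a b)
    (hMmax : ∀ b, b ≤ n → ∀ a, a ≤ n →
      (∀ a', a' ≤ n → f a b ≤ f a' b) → a ≤ M b)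
    (b b' : ℕ) (hbb' : b ≤ b') (hb' : b' ≤ n) :
    M b ≤ M b' := by
  have hb : b ≤ n := le_trans hbb' hb'
  by_contra h
  push_neg at h
  have hAB : M b' ≤ M b := le_of_lt h
  have hA := hMmem b hb
  have hB := hMmem b' hb'
  have h1 := hsub (M b') (M b) b b' hAB hA hbb' hb'
  have h2 := hMmin b hb (M b') hB
  have h3 : f (M b) b' ≤ f (M b') b' := by linarith
  have h4 : M b ≤ M b' := by
    apply hMmax b' hb' (M b) hA
    intro a' ha'
    exact le_trans h3 (hMmin b' hb' a' ha')
  exact absurd h4 (not_le.mpr h)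
end

section
/- Fix a natural number Am, a real weight w > 0, and ce : ℕ → ℝ, and let c(a,b) = w·ce(a) + (b+1)/(a+1) for a, b ∈ A = {0,…,Am} (naturals cast to reals). Define BR(b) as the largest minimizer of a ↦ c(a,b) over A. Then BR is nondecreasing on A: b ≤ b' ≤ Am implies BR(b) ≤ BR(b'). -/
/-!
The cost has decreasing differences: `c a b' - c a b = (b' - b) / (a + 1)` shrinks as `a` grows.
Topkis' argument then applies: if the best response `a` to `b` exceeded the maximal best
response `a'` to `b' ≥ b`, moving from `b` to `b'` would raise the cost of `a` by no more than
that of `a'`, so `a` would also be a best response to `b'`, contradicting the maximality of `a'`.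
-/

/-- Submodularity of `f` on a product of chains, in the form used for minimisation. -/
def HasDecreasingDifferences {α β M : Type*} [Preorder α] [Preorder β] [AddCommGroup M]
    [PartialOrder M] (f : α → β → M) : Prop :=
  ∀ ⦃a a'⦄, a ≤ a' → ∀ ⦃b b'⦄, b ≤ b' → f a' b' - f a' b ≤ f a b' - f a b

section DecreasingDifferences

variable {α β M : Type*} [AddCommGroup M] [PartialOrder M] [IsOrderedAddMonoid M]

theorem hasDecreasingDifferences_add_mul {R : Type*} [Preorder α] [Preorder β] [Ring R]
    [PartialOrder R] [IsOrderedRing R] {g : α → R} {h : β → R} {u : α → R}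
    (hh : Monotone h) (hu : Antitone u) :
    HasDecreasingDifferences fun a b => g a + h b * u a := by
  intro a a' haa' b b' hbb'
  have hdiff : ∀ x, g x + h b' * u x - (g x + h b * u x) = (h b' - h b) * u x := fun x => by
    rw [add_sub_add_left_eq_sub, sub_mul]
  rw [hdiff, hdiff]
  exact mul_le_mul_of_nonneg_left (hu haa') (sub_nonneg.2 (hh hbb'))

/-- Topkis' monotonicity theorem for the largest minimiser. -/
theorem HasDecreasingDifferences.le_of_isMinOn [LinearOrder α] [Preorder β] {f : α → β → M}
    (hf : HasDecreasingDifferences f) {s : Set α} {a a' : α} {b b' : β} (hbb' : b ≤ b')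
    (ha : a ∈ s) (ha' : a' ∈ s) (hmin : IsMinOn (f · b) s a) (hmin' : IsMinOn (f · b') s a')
    (hmax' : ∀ x ∈ s, IsMinOn (f · b') s x → x ≤ a') :
    a ≤ a' := by
  refine le_of_not_gt fun ha'a => ?_
  have hcheaper : f a b' ≤ f a' b' :=
    calc f a b' = (f a b' - f a b) + f a b := (sub_add_cancel _ _).symm
      _ ≤ (f a' b' - f a' b) + f a' b := add_le_add (hf ha'a.le hbb') (isMinOn_iff.1 hmin a' ha')
      _ = f a' b' := sub_add_cancel _ _
  exact ha'a.not_ge <| hmax' a ha <| isMinOn_iff.2 fun x hx =>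
    hcheaper.trans (isMinOn_iff.1 hmin' x hx)

end DecreasingDifferences

theorem antitone_one_div_natCast_add_one : Antitone fun a : ℕ => 1 / ((a : ℝ) + 1) :=
  fun _ _ hab => one_div_le_one_div_of_le (by positivity) (by gcongr)

theorem maximal_best_response_monotone_general (Am : ℕ) (w : ℝ)
    (ce : ℕ → ℝ) (c : ℕ → ℕ → ℝ)
    (hc : ∀ a b : ℕ, c a b = w * ce a + ((b : ℝ) + 1) / ((a : ℝ) + 1))
    (BR : ℕ → ℕ)
    (hBRmem : ∀ b, b ≤ Am → BR b ≤ Am)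
    (hBRmin : ∀ b, b ≤ Am → ∀ a, a ≤ Am → c (BR b) b ≤ c a b)
    (hBRmax : ∀ b, b ≤ Am → ∀ a, a ≤ Am →
      (∀ a', a' ≤ Am → c a b ≤ c a' b) → a ≤ BR b)
    (b b' : ℕ) (hbb' : b ≤ b') (hb' : b' ≤ Am) :
    BR b ≤ BR b' := by
  have hb : b ≤ Am := hbb'.trans hb'
  have hcost : c = fun a (b : ℕ) => w * ce a + ((b : ℝ) + 1) * (1 / ((a : ℝ) + 1)) := by
    funext a b
    rw [hc, mul_one_div]
  have hdd : HasDecreasingDifferences c := by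
    rw [hcost]
    exact hasDecreasingDifferences_add_mul (fun _ _ h => by gcongr)
      antitone_one_div_natCast_add_one
  exact hdd.le_of_isMinOn (s := Set.Iic Am) hbb' (hBRmem b hb) (hBRmem b' hb')
    (isMinOn_iff.2 (hBRmin b hb)) (isMinOn_iff.2 (hBRmin b' hb'))
    fun x hx hxmin => hBRmax b' hb' x hx (isMinOn_iff.1 hxmin)

/-- In the adaptive-modulation game, the maximal best response
(the largest minimizer of `a ↦ c a b` over `A = {0,…,Am}`) is nondecreasing in
the opponent's action `b`. -/
theorem maximal_best_response_monotone (Am : ℕ) (w : ℝ) (hw : 0 < w)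
    (ce : ℕ → ℝ) (c : ℕ → ℕ → ℝ)
    (hc : ∀ a b : ℕ, c a b = w * ce a + ((b : ℝ) + 1) / ((a : ℝ) + 1))
    (BR : ℕ → ℕ)
    (hBRmem : ∀ b, b ≤ Am → BR b ≤ Am)
    (hBRmin : ∀ b, b ≤ Am → ∀ a, a ≤ Am → c (BR b) b ≤ c a b)
    (hBRmax : ∀ b, b ≤ Am → ∀ a, a ≤ Am →
      (∀ a', a' ≤ Am → c a b ≤ c a' b) → a ≤ BR b)
    (b b' : ℕ) (hbb' : b ≤ b') (hb' : b' ≤ Am) :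
    BR b ≤ BR b' :=
  maximal_best_response_monotone_general Am w ce c hc BR hBRmem hBRmin hBRmax b b' hbb' hb'
end

section
/- Fix a natural number Am, a real weight w > 0, and any ce₁, ce₂ : ℕ → ℝ. Then the two-player adaptive-modulation game with strategy set A = {0,…,Am} and costs c₁(a,b) = w·ce₁(a) + (b+1)/(a+1) for player 1 and c₂(b,a) = w·ce₂(b) + (a+1)/(b+1) for player 2 admits a pure strategy Nash equilibrium: there exist a*, b* ∈ A such that c₁(a*,b*) ≤ c₁(a,b*) for all a ∈ A and c₂(b*,a*) ≤ c₂(b,a*) for all b ∈ A. -/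
/-- Single-crossing property of the cost `w·ce(a) + (b+1)/(a+1)`. -/
lemma psne_sc (w : ℝ) (ce : ℕ → ℝ) (a' a b b' : ℕ) (haa : a' < a) (hbb : b ≤ b')
    (h : w * ce a + ((b : ℝ) + 1) / ((a : ℝ) + 1) ≤ w * ce a' + ((b : ℝ) + 1) / ((a' : ℝ) + 1)) :
    w * ce a + ((b' : ℝ) + 1) / ((a : ℝ) + 1) ≤ w * ce a' + ((b' : ℝ) + 1) / ((a' : ℝ) + 1) := by
  have h1 : (0:ℝ) < (a' : ℝ) + 1 := by positivity
  have h2 : (0:ℝ) < (a : ℝ) + 1 := by positivity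
  have hle : (a' : ℝ) + 1 ≤ (a : ℝ) + 1 := by
    have : (a' : ℝ) ≤ (a : ℝ) := by exact_mod_cast haa.le
    linarith
  have hd : ((a : ℝ) + 1)⁻¹ ≤ ((a' : ℝ) + 1)⁻¹ := by
    exact inv_anti₀ h1 hle
  have hb : (b : ℝ) + 1 ≤ (b' : ℝ) + 1 := by
    have : (b : ℝ) ≤ (b' : ℝ) := by exact_mod_cast hbb
    linarith
  have hprod : 0 ≤ (((b' : ℝ) + 1) - ((b : ℝ) + 1)) *
      (((a' : ℝ) + 1)⁻¹ - ((a : ℝ) + 1)⁻¹) :=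
    mul_nonneg (by linarith) (by linarith)
  simp only [div_eq_mul_inv] at h ⊢
  nlinarith [hprod]

/-- Existence of a monotone (largest) best-response map on `{0,…,Am}`. -/
lemma psne_br (Am : ℕ) (g : ℕ → ℕ → ℝ)
    (hsc : ∀ a' a b b', a' < a → b ≤ b' → g a b ≤ g a' b → g a b' ≤ g a' b') :
    ∃ br : ℕ → ℕ, (∀ b, br b ≤ Am) ∧ (∀ b a, a ≤ Am → g (br b) b ≤ g a b) ∧
      (∀ b b', b ≤ b' → br b ≤ br b') := by
  classical
  let S : ℕ → Finset ℕ := fun b =>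
    (Finset.range (Am+1)).filter (fun a => ∀ a' ∈ Finset.range (Am+1), g a b ≤ g a' b)
  have hmem : ∀ b x, x ∈ S b ↔
      x ∈ Finset.range (Am+1) ∧ ∀ a' ∈ Finset.range (Am+1), g x b ≤ g a' b := by
    intro b x
    simp [S, Finset.mem_filter]
  have hne : ∀ b, (S b).Nonempty := by
    intro b
    obtain ⟨a, ha, hmin⟩ := Finset.exists_min_image (Finset.range (Am+1))
      (fun a => g a b) ⟨0, by simp⟩
    exact ⟨a, (hmem b a).mpr ⟨ha, hmin⟩⟩
  refine ⟨fun b => (S b).max' (hne b), ?_, ?_, ?_⟩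
  · intro b
    show (S b).max' (hne b) ≤ Am
    have := ((hmem b _).mp ((S b).max'_mem (hne b))).1
    rw [Finset.mem_range] at this
    omega
  · intro b a ha
    have hm := (hmem b _).mp ((S b).max'_mem (hne b))
    exact hm.2 a (Finset.mem_range.mpr (by omega))
  · intro b b' hbb
    by_contra hlt
    push_neg at hlt
    have hma := (hmem b _).mp ((S b).max'_mem (hne b))
    have hma' := (hmem b' _).mp ((S b').max'_mem (hne b'))
    have h1 : g ((S b).max' (hne b)) b ≤ g ((S b').max' (hne b')) b :=
      hma.2 _ hma'.1
    have h2 : ∀ c ∈ Finset.range (Am+1), g ((S b).max' (hne b)) b' ≤ g c b' := by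
      intro c hc
      exact (hsc _ _ b b' hlt hbb h1).trans (hma'.2 c hc)
    have hmem' : (S b).max' (hne b) ∈ S b' := (hmem b' _).mpr ⟨hma.1, h2⟩
    exact absurd (Finset.le_max' (S b') _ hmem') (not_le.mpr hlt)

/-- A monotone self-map of `{0,…,Am}` has a fixed point. -/
lemma psne_fix (Am : ℕ) (T : ℕ → ℕ) (hb : ∀ n, T n ≤ Am)
    (hm : ∀ x y, x ≤ y → T x ≤ T y) : ∃ b, b ≤ Am ∧ T b = b := by
  by_contra h
  push_neg at h
  have key : ∀ n, n ≤ T^[n] 0 ∧ T^[n] 0 ≤ Am := by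
    intro n
    induction n with
    | zero => exact ⟨Nat.zero_le _, Nat.zero_le _⟩
    | succ k ih =>
      rw [Function.iterate_succ_apply']
      refine ⟨?_, hb _⟩
      have hne : T (T^[k] 0) ≠ T^[k] 0 := h _ ih.2
      have hle : T^[k] 0 ≤ T (T^[k] 0) := by
        -- the orbit is nondecreasing
        have aux : ∀ m, T^[m] 0 ≤ T^[m+1] 0 := by
          intro m
          induction m with
          | zero => simpa using Nat.zero_le (T 0)
          | succ j ihj =>
            rw [Function.iterate_succ_apply', Function.iterate_succ_apply']
            exact hm _ _ ihj
        simpa [Function.iterate_succ_apply'] using aux k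
      omega
  have h1 := (key (Am+1)).1
  have h2 := (key (Am+1)).2
  omega

/-- The two-player adaptive-modulation game on `A = {0,…,Am}` with costs
`c₁(a,b) = w·ce₁(a) + (b+1)/(a+1)` and `c₂(b,a) = w·ce₂(b) + (a+1)/(b+1)`
admits a pure strategy Nash equilibrium. -/
theorem psne_exists (Am : ℕ) (w : ℝ) (hw : 0 < w)
    (ce1 ce2 : ℕ → ℝ) (c1 c2 : ℕ → ℕ → ℝ)
    (hc1 : ∀ a b : ℕ, c1 a b = w * ce1 a + ((b : ℝ) + 1) / ((a : ℝ) + 1))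
    (hc2 : ∀ b a : ℕ, c2 b a = w * ce2 b + ((a : ℝ) + 1) / ((b : ℝ) + 1)) :
    ∃ astar bstar : ℕ, astar ≤ Am ∧ bstar ≤ Am ∧
      (∀ a, a ≤ Am → c1 astar bstar ≤ c1 a bstar) ∧
      (∀ b, b ≤ Am → c2 bstar astar ≤ c2 b astar) := by
  obtain ⟨br1, hbr1le, hbr1min, hbr1mono⟩ := psne_br Am c1 (by
    intro a' a b b' haa hbb hle
    rw [hc1, hc1] at hle ⊢
    exact psne_sc w ce1 a' a b b' haa hbb hle)
  obtain ⟨br2, hbr2le, hbr2min, hbr2mono⟩ := psne_br Am c2 (by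
    intro b' b a a' hbbx haa hle
    rw [hc2, hc2] at hle ⊢
    exact psne_sc w ce2 b' b a a' hbbx haa hle)
  obtain ⟨bstar, hbAm, hbfix⟩ := psne_fix Am (fun b => br2 (br1 b))
    (fun n => hbr2le _) (fun x y hxy => hbr2mono _ _ (hbr1mono _ _ hxy))
  refine ⟨br1 bstar, bstar, hbr1le _, hbAm, fun a ha => hbr1min _ _ ha, fun b hbb => ?_⟩
  have : br2 (br1 bstar) = bstar := hbfix
  calc c2 bstar (br1 bstar) = c2 (br2 (br1 bstar)) (br1 bstar) := by rw [this]
    _ ≤ c2 b (br1 bstar) := hbr2min _ _ hbb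
end

section
/- Fix a natural number Am, a real weight w > 0, and ce₁, ce₂ : ℕ → ℝ, and consider the two-player adaptive-modulation game with strategy set A = {0,…,Am} and costs c₁(a,b) = w·ce₁(a) + (b+1)/(a+1), c₂(b,a) = w·ce₂(b) + (a+1)/(b+1). Then the set of pure strategy Nash equilibria has a greatest element with respect to the componentwise order on pairs: there is a PSNE (ā,b̄) such that every PSNE (a,b) satisfies a ≤ ā and b ≤ b̄. -/
private lemma exists_greatest_argmin {n : ℕ} (g : Fin (n + 1) → ℝ) :
    ∃ m, (∀ x, g m ≤ g x) ∧ ∀ x, (∀ y, g x ≤ g y) → x ≤ m := by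
  classical
  obtain ⟨x0, -, hx0⟩ := Finset.exists_min_image Finset.univ g ⟨0, Finset.mem_univ 0⟩
  set s : Finset (Fin (n + 1)) := Finset.univ.filter (fun x => ∀ y, g x ≤ g y) with hs
  have hne : s.Nonempty := ⟨x0, by
    simp only [hs, Finset.mem_filter, Finset.mem_univ, true_and]
    exact fun y => hx0 y (Finset.mem_univ y)⟩
  refine ⟨s.max' hne, ?_, ?_⟩
  · have h := s.max'_mem hne
    simp only [hs, Finset.mem_filter, Finset.mem_univ, true_and] at h
    exact h
  · intro x hx
    exact Finset.le_max' s x (by simp [hs, hx])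

/-- The set of pure strategy Nash equilibria of the two-player
adaptive-modulation game has a greatest element in the componentwise order. -/
theorem greatest_psne_exists (Am : ℕ) (w : ℝ) (hw : 0 < w)
    (ce1 ce2 : ℕ → ℝ) (c1 c2 : ℕ → ℕ → ℝ)
    (hc1 : ∀ a b : ℕ, c1 a b = w * ce1 a + ((b : ℝ) + 1) / ((a : ℝ) + 1))
    (hc2 : ∀ b a : ℕ, c2 b a = w * ce2 b + ((a : ℝ) + 1) / ((b : ℝ) + 1)) :
    ∃ abar bbar : ℕ, abar ≤ Am ∧ bbar ≤ Am ∧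
      (∀ a, a ≤ Am → c1 abar bbar ≤ c1 a bbar) ∧
      (∀ b, b ≤ Am → c2 bbar abar ≤ c2 b abar) ∧
      (∀ a b : ℕ, a ≤ Am → b ≤ Am →
        (∀ a', a' ≤ Am → c1 a b ≤ c1 a' b) →
        (∀ b', b' ≤ Am → c2 b a ≤ c2 b' a) →
        a ≤ abar ∧ b ≤ bbar) := by
  classical
  -- increasing differences (algebraic core)
  have core : ∀ (a a' b b' : ℕ), a' ≤ a → b ≤ b' →
      ((b' : ℝ) + 1) / ((a : ℝ) + 1) + ((b : ℝ) + 1) / ((a' : ℝ) + 1) ≤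
      ((b : ℝ) + 1) / ((a : ℝ) + 1) + ((b' : ℝ) + 1) / ((a' : ℝ) + 1) := by
    intro a a' b b' ha hb
    have hx : (0 : ℝ) < (a : ℝ) + 1 := by positivity
    have hy : (0 : ℝ) < (a' : ℝ) + 1 := by positivity
    have hxy : ((a' : ℝ) + 1) ≤ (a : ℝ) + 1 := by
      have : (a' : ℝ) ≤ (a : ℝ) := by exact_mod_cast ha
      linarith
    have hbb : ((b : ℝ) + 1) ≤ (b' : ℝ) + 1 := by
      have : (b : ℝ) ≤ (b' : ℝ) := by exact_mod_cast hb
      linarith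
    rw [div_add_div _ _ hx.ne' hy.ne', div_add_div _ _ hx.ne' hy.ne',
      div_le_div_iff₀ (by positivity) (by positivity)]
    nlinarith [mul_nonneg (mul_nonneg (sub_nonneg.2 hbb) (sub_nonneg.2 hxy)) (mul_pos hx hy).le]
  have incd1 : ∀ (a a' b b' : ℕ), a' ≤ a → b ≤ b' →
      c1 a b' + c1 a' b ≤ c1 a b + c1 a' b' := by
    intro a a' b b' ha hb
    rw [hc1, hc1, hc1, hc1]
    have := core a a' b b' ha hb
    linarith
  have incd2 : ∀ (b b' a a' : ℕ), b' ≤ b → a ≤ a' →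
      c2 b a' + c2 b' a ≤ c2 b a + c2 b' a' := by
    intro b b' a a' hb ha
    rw [hc2, hc2, hc2, hc2]
    have := core b b' a a' hb ha
    linarith
  -- greatest best responses
  choose BR1 hBR1min hBR1max using fun b : Fin (Am + 1) =>
    exists_greatest_argmin (fun a : Fin (Am + 1) => c1 a.1 b.1)
  choose BR2 hBR2min hBR2max using fun a : Fin (Am + 1) =>
    exists_greatest_argmin (fun b : Fin (Am + 1) => c2 b.1 a.1)
  have mono1 : Monotone BR1 := by
    intro b b' hbb
    rcases le_total (BR1 b) (BR1 b') with h | h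
    · exact h
    · refine hBR1max b' (BR1 b) ?_
      intro y
      have h1 : c1 (BR1 b).1 (b').1 + c1 (BR1 b').1 b.1 ≤
          c1 (BR1 b).1 b.1 + c1 (BR1 b').1 (b').1 :=
        incd1 _ _ _ _ (Fin.le_def.mp h) (Fin.le_def.mp hbb)
      have h2 := hBR1min b (BR1 b')
      have h3 := hBR1min b' y
      linarith
  have mono2 : Monotone BR2 := by
    intro a a' haa
    rcases le_total (BR2 a) (BR2 a') with h | h
    · exact h
    · refine hBR2max a' (BR2 a) ?_
      intro y
      have h1 : c2 (BR2 a).1 (a').1 + c2 (BR2 a').1 a.1 ≤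
          c2 (BR2 a).1 a.1 + c2 (BR2 a').1 (a').1 :=
        incd2 _ _ _ _ (Fin.le_def.mp h) (Fin.le_def.mp haa)
      have h2 := hBR2min a (BR2 a')
      have h3 := hBR2min a' y
      linarith
  -- Tarski greatest fixed point
  let F : (Fin (Am + 1) × Fin (Am + 1)) →o (Fin (Am + 1) × Fin (Am + 1)) :=
    ⟨fun p => (BR1 p.2, BR2 p.1), fun p q hpq => ⟨mono1 hpq.2, mono2 hpq.1⟩⟩
  set P := OrderHom.gfp F with hPdef
  have hfix : F P = P := OrderHom.map_gfp F
  have hfix1 : BR1 P.2 = P.1 := congrArg Prod.fst hfix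
  have hfix2 : BR2 P.1 = P.2 := congrArg Prod.snd hfix
  refine ⟨P.1.1, P.2.1, Nat.lt_succ_iff.mp P.1.2, Nat.lt_succ_iff.mp P.2.2, ?_, ?_, ?_⟩
  · intro a ha
    have := hBR1min P.2 ⟨a, Nat.lt_succ_of_le ha⟩
    rwa [hfix1] at this
  · intro b hb
    have := hBR2min P.1 ⟨b, Nat.lt_succ_of_le hb⟩
    rwa [hfix2] at this
  · intro a b ha hb hbr1 hbr2
    set p : Fin (Am + 1) × Fin (Am + 1) :=
      (⟨a, Nat.lt_succ_of_le ha⟩, ⟨b, Nat.lt_succ_of_le hb⟩) with hp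
    have hpost : p ≤ F p := by
      constructor
      · exact hBR1max p.2 p.1 fun y => hbr1 y.1 (Nat.lt_succ_iff.mp y.2)
      · exact hBR2max p.1 p.2 fun y => hbr2 y.1 (Nat.lt_succ_iff.mp y.2)
    have hle : p ≤ P := OrderHom.le_gfp F hpost
    exact ⟨hle.1, hle.2⟩
end

section
/- Fix a natural number Am, a real weight w > 0, and ce₁, ce₂ : ℕ → ℝ, and consider the two-player adaptive-modulation game with strategy set A = {0,…,Am} and costs c₁(a,b) = w·ce₁(a) + (b+1)/(a+1), c₂(b,a) = w·ce₂(b) + (a+1)/(b+1). Then the set of pure strategy Nash equilibria has a least element with respect to the componentwise order on pairs: there is a PSNE (a₀,b₀) such that every PSNE (a,b) satisfies a₀ ≤ a and b₀ ≤ b. -/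
/-- Existence of a least argmin over `{0,…,Am}`. -/
lemma exists_least_min (Am : ℕ) (g : ℕ → ℝ) :
    ∃ a, (a ≤ Am ∧ ∀ a', a' ≤ Am → g a ≤ g a') ∧
      ∀ c, c ≤ Am → (∀ a', a' ≤ Am → g c ≤ g a') → a ≤ c := by
  classical
  obtain ⟨m, hm, hmin⟩ := Finset.exists_min_image (Finset.range (Am+1)) g ⟨0, by simp⟩
  have hex : ∃ a, a ≤ Am ∧ ∀ a', a' ≤ Am → g a ≤ g a' :=
    ⟨m, Nat.lt_succ_iff.mp (Finset.mem_range.mp hm),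
     fun a' ha' => hmin a' (Finset.mem_range.mpr (Nat.lt_succ_of_le ha'))⟩
  exact ⟨Nat.find hex, Nat.find_spec hex, fun c hc hcall => Nat.find_min' hex ⟨hc, hcall⟩⟩

noncomputable def lam (Am : ℕ) (g : ℕ → ℝ) : ℕ := Classical.choose (exists_least_min Am g)

lemma lam_le (Am : ℕ) (g : ℕ → ℝ) : lam Am g ≤ Am :=
  (Classical.choose_spec (exists_least_min Am g)).1.1

lemma lam_min (Am : ℕ) (g : ℕ → ℝ) : ∀ a', a' ≤ Am → g (lam Am g) ≤ g a' :=
  (Classical.choose_spec (exists_least_min Am g)).1.2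

lemma lam_least (Am : ℕ) (g : ℕ → ℝ) :
    ∀ c, c ≤ Am → (∀ a', a' ≤ Am → g c ≤ g a') → lam Am g ≤ c :=
  (Classical.choose_spec (exists_least_min Am g)).2

lemma lam_strict (Am : ℕ) (g : ℕ → ℝ) {c : ℕ} (hc : c < lam Am g) :
    g (lam Am g) < g c := by
  have hcAm : c ≤ Am := le_trans (le_of_lt hc) (lam_le Am g)
  by_contra h
  push_neg at h
  have hcmin : ∀ a', a' ≤ Am → g c ≤ g a' := fun a' ha' =>
    le_trans h (lam_min Am g a' ha')
  exact absurd (lam_least Am g c hcAm hcmin) (Nat.not_le.mpr hc)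

/-- Least best response for costs of the form `w·ce(x) + (y+1)/(x+1)`. -/
noncomputable def BR (Am : ℕ) (w : ℝ) (ce : ℕ → ℝ) (y : ℕ) : ℕ :=
  lam Am (fun x => w * ce x + ((y : ℝ) + 1) / ((x : ℝ) + 1))

lemma BR_le (Am : ℕ) (w : ℝ) (ce : ℕ → ℝ) (y : ℕ) : BR Am w ce y ≤ Am := lam_le _ _

lemma BR_min (Am : ℕ) (w : ℝ) (ce : ℕ → ℝ) (y : ℕ) :
    ∀ x', x' ≤ Am →
      w * ce (BR Am w ce y) + ((y : ℝ) + 1) / ((BR Am w ce y : ℝ) + 1)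
        ≤ w * ce x' + ((y : ℝ) + 1) / ((x' : ℝ) + 1) := by
  intro x' hx'
  exact lam_min Am (fun x => w * ce x + ((y : ℝ) + 1) / ((x : ℝ) + 1)) x' hx'

lemma BR_least (Am : ℕ) (w : ℝ) (ce : ℕ → ℝ) (y : ℕ) {x : ℕ} (hx : x ≤ Am)
    (hmin : ∀ x', x' ≤ Am →
      w * ce x + ((y : ℝ) + 1) / ((x : ℝ) + 1)
        ≤ w * ce x' + ((y : ℝ) + 1) / ((x' : ℝ) + 1)) :
    BR Am w ce y ≤ x :=
  lam_least Am (fun x => w * ce x + ((y : ℝ) + 1) / ((x : ℝ) + 1)) x hx hmin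

lemma BR_mono (Am : ℕ) (w : ℝ) (ce : ℕ → ℝ) {y y' : ℕ} (hy : y ≤ y') :
    BR Am w ce y ≤ BR Am w ce y' := by
  by_contra h
  push_neg at h
  set g := fun x : ℕ => w * ce x + ((y : ℝ) + 1) / ((x : ℝ) + 1) with hg
  set g' := fun x : ℕ => w * ce x + ((y' : ℝ) + 1) / ((x : ℝ) + 1) with hg'
  set a' : ℕ := BR Am w ce y' with ha'
  set a : ℕ := BR Am w ce y with ha
  have h1 : g a < g a' := lam_strict Am g h
  have h2 : g' a' ≤ g' a := lam_min Am g' a (lam_le Am g)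
  have hA : (0:ℝ) < (a : ℝ) + 1 := by positivity
  have hA' : (0:ℝ) < (a' : ℝ) + 1 := by positivity
  have haa : (a' : ℝ) + 1 < (a : ℝ) + 1 := by
    exact_mod_cast Nat.add_lt_add_right h 1
  have hbb : ((y : ℝ) + 1) ≤ ((y' : ℝ) + 1) := by
    exact_mod_cast Nat.add_le_add_right hy 1
  simp only [hg, hg'] at h1 h2
  have key : ((y : ℝ) + 1) / ((a : ℝ) + 1) + ((y' : ℝ) + 1) / ((a' : ℝ) + 1)
      < ((y : ℝ) + 1) / ((a' : ℝ) + 1) + ((y' : ℝ) + 1) / ((a : ℝ) + 1) := by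
    linarith
  rw [div_add_div _ _ (ne_of_gt hA) (ne_of_gt hA'), div_add_div _ _ (ne_of_gt hA') (ne_of_gt hA),
    div_lt_div_iff₀ (by positivity) (by positivity)] at key
  have hprod : (0:ℝ) ≤ (((y' : ℝ) + 1) - ((y : ℝ) + 1)) * (((a : ℝ) + 1) - ((a' : ℝ) + 1)) :=
    mul_nonneg (by linarith) (by linarith)
  nlinarith [mul_nonneg hprod (le_of_lt (mul_pos hA hA')), key, mul_pos hA hA']

/-- The set of pure strategy Nash equilibria of the two-player
adaptive-modulation game has a least element in the componentwise order. -/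
theorem least_psne_exists (Am : ℕ) (w : ℝ) (hw : 0 < w)
    (ce1 ce2 : ℕ → ℝ) (c1 c2 : ℕ → ℕ → ℝ)
    (hc1 : ∀ a b : ℕ, c1 a b = w * ce1 a + ((b : ℝ) + 1) / ((a : ℝ) + 1))
    (hc2 : ∀ b a : ℕ, c2 b a = w * ce2 b + ((a : ℝ) + 1) / ((b : ℝ) + 1)) :
    ∃ a0 b0 : ℕ, a0 ≤ Am ∧ b0 ≤ Am ∧
      (∀ a, a ≤ Am → c1 a0 b0 ≤ c1 a b0) ∧
      (∀ b, b ≤ Am → c2 b0 a0 ≤ c2 b a0) ∧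
      (∀ a b : ℕ, a ≤ Am → b ≤ Am →
        (∀ a', a' ≤ Am → c1 a b ≤ c1 a' b) →
        (∀ b', b' ≤ Am → c2 b a ≤ c2 b' a) →
        a0 ≤ a ∧ b0 ≤ b) := by
  classical
  have br1_min : ∀ b a', a' ≤ Am → c1 (BR Am w ce1 b) b ≤ c1 a' b := by
    intro b a' ha'
    rw [hc1, hc1]
    exact BR_min Am w ce1 b a' ha'
  have br2_min : ∀ a b', b' ≤ Am → c2 (BR Am w ce2 a) a ≤ c2 b' a := by
    intro a b' hb'
    rw [hc2, hc2]
    exact BR_min Am w ce2 a b' hb'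
  have br1_least : ∀ b a, a ≤ Am → (∀ a', a' ≤ Am → c1 a b ≤ c1 a' b) → BR Am w ce1 b ≤ a := by
    intro b a ha hmin
    refine BR_least Am w ce1 b ha ?_
    intro a' ha'
    rw [← hc1, ← hc1]
    exact hmin a' ha'
  have br2_least : ∀ a b, b ≤ Am → (∀ b', b' ≤ Am → c2 b a ≤ c2 b' a) → BR Am w ce2 a ≤ b := by
    intro a b hb hmin
    refine BR_least Am w ce2 a hb ?_
    intro b' hb'
    rw [← hc2, ← hc2]
    exact hmin b' hb'
  -- best response map and its iterates
  set F : ℕ × ℕ → ℕ × ℕ := fun p => (BR Am w ce1 p.2, BR Am w ce2 p.1) with hF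
  have F_mono : ∀ p q : ℕ × ℕ, p ≤ q → F p ≤ F q := by
    intro p q hpq
    rw [Prod.le_def] at hpq ⊢
    exact ⟨BR_mono Am w ce1 hpq.2, BR_mono Am w ce2 hpq.1⟩
  set x : ℕ → ℕ × ℕ := fun n => F^[n] (0, 0) with hx
  have hxsucc : ∀ n, x (n + 1) = F (x n) := by
    intro n
    simp only [hx, Function.iterate_succ_apply']
  have hxmono : ∀ n, x n ≤ x (n + 1) := by
    intro n
    induction n with
    | zero => exact ⟨Nat.zero_le _, Nat.zero_le _⟩
    | succ k ih =>
      rw [hxsucc k] at ih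
      rw [hxsucc (k+1), hxsucc k]
      exact F_mono _ _ ih
  have hxbound : ∀ n, (x (n + 1)).1 ≤ Am ∧ (x (n + 1)).2 ≤ Am := by
    intro n
    rw [hxsucc n]
    exact ⟨BR_le _ _ _ _, BR_le _ _ _ _⟩
  -- stabilization
  have hstab : ∃ k, x k = x (k + 1) := by
    by_contra h
    push_neg at h
    have hs : StrictMono (fun n => (x n).1 + (x n).2) := by
      apply strictMono_nat_of_lt_succ
      intro n
      have h1 := (hxmono n).1
      have h2 := (hxmono n).2
      have hne : (x n).1 ≠ (x (n+1)).1 ∨ (x n).2 ≠ (x (n+1)).2 := by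
        by_contra hcon
        push_neg at hcon
        exact h n (Prod.ext hcon.1 hcon.2)
      rcases hne with h' | h' <;> · show (x n).1 + (x n).2 < (x (n+1)).1 + (x (n+1)).2; omega
    have hge : 2 * Am + 1 ≤ (x (2 * Am + 1)).1 + (x (2 * Am + 1)).2 := hs.le_apply
    have hb := hxbound (2 * Am)
    omega
  obtain ⟨k, hk⟩ := hstab
  have hfix : F (x k) = x k := by rw [← hxsucc k, hk]
  have hfix1 : (x k).1 = BR Am w ce1 (x k).2 := by conv_lhs => rw [← hfix]
  have hfix2 : (x k).2 = BR Am w ce2 (x k).1 := by conv_lhs => rw [← hfix]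
  refine ⟨(x k).1, (x k).2, ?_, ?_, ?_, ?_, ?_⟩
  · rw [hfix1]; exact BR_le _ _ _ _
  · rw [hfix2]; exact BR_le _ _ _ _
  · intro a ha
    conv_lhs => rw [hfix1]
    exact br1_min _ a ha
  · intro b hb
    conv_lhs => rw [hfix2]
    exact br2_min _ b hb
  · intro a b ha hb hmina hminb
    have hpre : F (a, b) ≤ (a, b) := by
      rw [Prod.le_def]
      exact ⟨br1_least b a ha hmina, br2_least a b hb hminb⟩
    have hxn : ∀ n, x n ≤ (a, b) := by
      intro n
      induction n with
      | zero => exact ⟨Nat.zero_le _, Nat.zero_le _⟩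
      | succ m ih =>
        rw [hxsucc m]
        exact le_trans (F_mono _ _ ih) hpre
    exact ⟨(hxn k).1, (hxn k).2⟩
end

section
/- Fix a natural number Am, w > 0, and ce₁, ce₂ : ℕ → ℝ, with costs c₁(a,b) = w·ce₁(a) + (b+1)/(a+1) and c₂(b,a) = w·ce₂(b) + (a+1)/(b+1) on A = {0,…,Am}. Let BR(a,b) = (BR₁(b), BR₂(a)), where BR₁(b) and BR₂(a) are the largest minimizers over A of a' ↦ c₁(a',b) and b' ↦ c₂(b',a), respectively. Define x₀ = (Am,Am) and x_{k+1} = BR(x_k). Then the sequence (x_k) is antitone in the componentwise order (x_{k+1} ≤ x_k for all k), and for every k ≥ 2·Am, x_k equals the greatest pure strategy Nash equilibrium of the game. -/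
/-- Monotonicity of the maximal best response for costs of the form
`w * f p + (q+1)/(p+1)`. -/
lemma br_mono_aux (Am : ℕ) (w : ℝ) (f : ℕ → ℝ) (C : ℕ → ℕ → ℝ)
    (hC : ∀ p q : ℕ, C p q = w * f p + ((q : ℝ) + 1) / ((p : ℝ) + 1))
    (BR : ℕ → ℕ)
    (hmem : ∀ q, q ≤ Am → BR q ≤ Am)
    (hmin : ∀ q, q ≤ Am → ∀ p, p ≤ Am → C (BR q) q ≤ C p q)
    (hmax : ∀ q, q ≤ Am → ∀ p, p ≤ Am →
      (∀ p', p' ≤ Am → C p q ≤ C p' q) → p ≤ BR q) :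
    ∀ q q', q ≤ q' → q' ≤ Am → BR q ≤ BR q' := by
  intro q q' hqq hq'
  have hq : q ≤ Am := hqq.trans hq'
  by_contra hcon
  push_neg at hcon
  set a := BR q with ha_def
  set a' := BR q' with ha'_def
  have ha : a ≤ Am := hmem q hq
  have ha' : a' ≤ Am := hmem q' hq'
  have h1 : C a q ≤ C a' q := hmin q hq a' ha'
  have key : C a q' ≤ C a' q' := by
    rw [hC, hC] at h1 ⊢
    have hlt : (a' : ℝ) < a := by exact_mod_cast hcon
    have hpos : (0 : ℝ) < (a' : ℝ) + 1 := by positivity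
    have hpos2 : (0 : ℝ) < (a : ℝ) + 1 := by positivity
    have hinv : ((a : ℝ) + 1)⁻¹ ≤ ((a' : ℝ) + 1)⁻¹ := by
      apply inv_anti₀ hpos
      linarith
    have hqr : (q : ℝ) ≤ (q' : ℝ) := by exact_mod_cast hqq
    have hprod : 0 ≤ ((q' : ℝ) - q) * (((a' : ℝ) + 1)⁻¹ - ((a : ℝ) + 1)⁻¹) :=
      mul_nonneg (by linarith) (by linarith)
    simp only [div_eq_mul_inv] at h1 ⊢
    nlinarith [hprod, h1]
  have hminA : ∀ p', p' ≤ Am → C a q' ≤ C p' q' := fun p' hp' =>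
    key.trans (hmin q' hq' p' hp')
  have := hmax q' hq' a ha hminA
  omega

/-- Maximal Cournot tatonnement: starting from the top strategy profile
`(Am, Am)`, iterating the maximal best response map yields an antitone
sequence, and after at most `2·Am` steps it equals the greatest pure strategy
Nash equilibrium of the game. -/
theorem cournot_tatonnement_max (Am : ℕ) (w : ℝ) (hw : 0 < w)
    (ce1 ce2 : ℕ → ℝ) (c1 c2 : ℕ → ℕ → ℝ)
    (hc1 : ∀ a b : ℕ, c1 a b = w * ce1 a + ((b : ℝ) + 1) / ((a : ℝ) + 1))
    (hc2 : ∀ b a : ℕ, c2 b a = w * ce2 b + ((a : ℝ) + 1) / ((b : ℝ) + 1))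
    (BR1 BR2 : ℕ → ℕ)
    (hBR1mem : ∀ b, b ≤ Am → BR1 b ≤ Am)
    (hBR1min : ∀ b, b ≤ Am → ∀ a, a ≤ Am → c1 (BR1 b) b ≤ c1 a b)
    (hBR1max : ∀ b, b ≤ Am → ∀ a, a ≤ Am →
      (∀ a', a' ≤ Am → c1 a b ≤ c1 a' b) → a ≤ BR1 b)
    (hBR2mem : ∀ a, a ≤ Am → BR2 a ≤ Am)
    (hBR2min : ∀ a, a ≤ Am → ∀ b, b ≤ Am → c2 (BR2 a) a ≤ c2 b a)
    (hBR2max : ∀ a, a ≤ Am → ∀ b, b ≤ Am →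
      (∀ b', b' ≤ Am → c2 b a ≤ c2 b' a) → b ≤ BR2 a)
    (x : ℕ → ℕ × ℕ) (hx0 : x 0 = (Am, Am))
    (hxs : ∀ k, x (k + 1) = (BR1 (x k).2, BR2 (x k).1)) :
    -- the sequence is antitone in the componentwise order
    (∀ k, (x (k + 1)).1 ≤ (x k).1 ∧ (x (k + 1)).2 ≤ (x k).2) ∧
    -- and for every k ≥ 2·Am, x k is the greatest PSNE
    (∀ k, 2 * Am ≤ k →
      (x k).1 ≤ Am ∧ (x k).2 ≤ Am ∧
      (∀ a, a ≤ Am → c1 (x k).1 (x k).2 ≤ c1 a (x k).2) ∧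
      (∀ b, b ≤ Am → c2 (x k).2 (x k).1 ≤ c2 b (x k).1) ∧
      (∀ a b : ℕ, a ≤ Am → b ≤ Am →
        (∀ a', a' ≤ Am → c1 a b ≤ c1 a' b) →
        (∀ b', b' ≤ Am → c2 b a ≤ c2 b' a) →
        a ≤ (x k).1 ∧ b ≤ (x k).2)) := by
  have m1 : ∀ q q', q ≤ q' → q' ≤ Am → BR1 q ≤ BR1 q' :=
    br_mono_aux Am w ce1 c1 hc1 BR1 hBR1mem hBR1min hBR1max
  have m2 : ∀ q q', q ≤ q' → q' ≤ Am → BR2 q ≤ BR2 q' :=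
    br_mono_aux Am w ce2 c2 hc2 BR2 hBR2mem hBR2min hBR2max
  -- bounds
  have hbd : ∀ k, (x k).1 ≤ Am ∧ (x k).2 ≤ Am := by
    intro k
    induction k with
    | zero => simp [hx0]
    | succ n ih =>
      rw [hxs]
      exact ⟨hBR1mem _ ih.2, hBR2mem _ ih.1⟩
  -- antitone
  have anti : ∀ k, (x (k + 1)).1 ≤ (x k).1 ∧ (x (k + 1)).2 ≤ (x k).2 := by
    intro k
    induction k with
    | zero =>
      rw [hxs, hx0]
      exact ⟨hBR1mem Am le_rfl, hBR2mem Am le_rfl⟩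
    | succ n ih =>
      have eA : (x (n + 1 + 1)).1 = BR1 ((x (n + 1)).2) := by rw [hxs (n + 1)]
      have eB : (x (n + 1 + 1)).2 = BR2 ((x (n + 1)).1) := by rw [hxs (n + 1)]
      have eC : (x (n + 1)).1 = BR1 ((x n).2) := by rw [hxs n]
      have eD : (x (n + 1)).2 = BR2 ((x n).1) := by rw [hxs n]
      constructor
      · rw [eA, eC]; exact m1 _ _ ih.2 (hbd n).2
      · rw [eB, eD]; exact m2 _ _ ih.1 (hbd n).1
  refine ⟨anti, ?_⟩
  -- once fixed, stays fixed
  have hfix : ∀ k, x k = x (k + 1) → ∀ j, x (k + j) = x k := by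
    intro k hk j
    induction j with
    | zero => rfl
    | succ n ih =>
      have : x (k + n + 1) = x (k + 1) := by
        rw [hxs (k + n), ih, ← hxs k]
      rw [show k + (n + 1) = k + n + 1 by ring, this, ← hk]
  -- progress lemma
  have hdec : ∀ k, x k = x (k + 1) ∨ (x k).1 + (x k).2 + k ≤ 2 * Am := by
    intro k
    induction k with
    | zero => right; rw [hx0]; omega
    | succ n ih =>
      by_cases h0 : x n = x (n + 1)
      · left
        show x (n + 1) = x (n + 1 + 1)
        rw [hxs (n + 1), ← h0, ← hxs n]
        exact h0
      · rcases ih with h | hs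
        · exact absurd h h0
        · by_cases h1 : x (n + 1) = x (n + 1 + 1)
          · exact Or.inl h1
          · right
            have ha1 := (anti n).1
            have ha2 := (anti n).2
            have hlt : (x (n + 1)).1 < (x n).1 ∨ (x (n + 1)).2 < (x n).2 := by
              by_contra hc
              push_neg at hc
              exact h0 (Prod.ext_iff.mpr
                ⟨(le_antisymm hc.1 ha1).symm, (le_antisymm hc.2 ha2).symm⟩).symm
            omega
  -- at time 2*Am the sequence is fixed
  have hAm : x (2 * Am) = x (2 * Am + 1) := by
    rcases hdec (2 * Am) with h | hs
    · exact h
    · have h1 : (x (2 * Am)).1 = 0 := by omega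
      have h2 : (x (2 * Am)).2 = 0 := by omega
      have ha1 := (anti (2 * Am)).1
      have ha2 := (anti (2 * Am)).2
      exact (Prod.ext_iff.mpr ⟨by omega, by omega⟩)
  have hstable : ∀ k, 2 * Am ≤ k → x k = x (2 * Am) := by
    intro k hk
    have := hfix (2 * Am) hAm (k - 2 * Am)
    rwa [show 2 * Am + (k - 2 * Am) = k by omega] at this
  intro k hk
  have hfixk : x k = x (k + 1) := by
    rw [hstable k hk, hstable (k + 1) (by omega)]
  have e1 : (x k).1 = BR1 (x k).2 := by
    have := hxs k
    rw [← hfixk] at this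
    exact congrArg Prod.fst this
  have e2 : (x k).2 = BR2 (x k).1 := by
    have := hxs k
    rw [← hfixk] at this
    exact congrArg Prod.snd this
  refine ⟨(hbd k).1, (hbd k).2, ?_, ?_, ?_⟩
  · intro a ha
    have := hBR1min (x k).2 (hbd k).2 a ha
    rwa [← e1] at this
  · intro b hb
    have := hBR2min (x k).1 (hbd k).1 b hb
    rwa [← e2] at this
  · intro a b ha hb hmina hminb
    have hle : ∀ j, a ≤ (x j).1 ∧ b ≤ (x j).2 := by
      intro j
      induction j with
      | zero => rw [hx0]; exact ⟨ha, hb⟩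
      | succ n ih =>
        rw [hxs n]
        constructor
        · exact (hBR1max b hb a ha hmina).trans (m1 b (x n).2 ih.2 (hbd n).2)
        · exact (hBR2max a ha b hb hminb).trans (m2 a (x n).1 ih.1 (hbd n).1)
    exact hle k
end

section
/- Fix a natural number Am, w > 0, and ce₁, ce₂ : ℕ → ℝ, with costs c₁(a,b) = w·ce₁(a) + (b+1)/(a+1) and c₂(b,a) = w·ce₂(b) + (a+1)/(b+1) on A = {0,…,Am}. Let br(a,b) = (br₁(b), br₂(a)), where br₁(b) and br₂(a) are the smallest minimizers over A of a' ↦ c₁(a',b) and b' ↦ c₂(b',a), respectively. Define y₀ = (0,0) and y_{k+1} = br(y_k). Then the sequence (y_k) is monotone nondecreasing in the componentwise order (y_k ≤ y_{k+1} for all k), and for every k ≥ 2·Am, y_k equals the least pure strategy Nash equilibrium of the game. -/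
/-- Single-crossing helper: if `a` beats `a'` at parameter `q` with `pa' < pa`,
then it strictly beats it at any larger parameter `q'`. -/
lemma cournot_helper (w e e' pa pa' q q' : ℝ) (hpa : 0 < pa) (hpa' : 0 < pa')
    (hlt : pa' < pa) (hq : q < q')
    (hmin : w * e + q / pa ≤ w * e' + q / pa') :
    w * e + q' / pa < w * e' + q' / pa' := by
  have h1 : 1 / pa < 1 / pa' := one_div_lt_one_div_of_lt hpa' hlt
  have h2 : 0 < (q' - q) * (1 / pa' - 1 / pa) :=
    mul_pos (by linarith) (by linarith)
  have e1 : q / pa = q * (1 / pa) := by ring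
  have e2 : q / pa' = q * (1 / pa') := by ring
  have e3 : q' / pa = q' * (1 / pa) := by ring
  have e4 : q' / pa' = q' * (1 / pa') := by ring
  rw [e1, e2] at hmin
  rw [e3, e4]
  nlinarith [h2]

/-- Minimal Cournot tatonnement: starting from the bottom strategy profile
`(0, 0)`, iterating the minimal best response map yields a nondecreasing
sequence, and after at most `2·Am` steps it equals the least pure strategy
Nash equilibrium of the game. -/
theorem cournot_tatonnement_min (Am : ℕ) (w : ℝ) (hw : 0 < w)
    (ce1 ce2 : ℕ → ℝ) (c1 c2 : ℕ → ℕ → ℝ)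
    (hc1 : ∀ a b : ℕ, c1 a b = w * ce1 a + ((b : ℝ) + 1) / ((a : ℝ) + 1))
    (hc2 : ∀ b a : ℕ, c2 b a = w * ce2 b + ((a : ℝ) + 1) / ((b : ℝ) + 1))
    (br1 br2 : ℕ → ℕ)
    (hbr1mem : ∀ b, b ≤ Am → br1 b ≤ Am)
    (hbr1min : ∀ b, b ≤ Am → ∀ a, a ≤ Am → c1 (br1 b) b ≤ c1 a b)
    (hbr1least : ∀ b, b ≤ Am → ∀ a, a ≤ Am →
      (∀ a', a' ≤ Am → c1 a b ≤ c1 a' b) → br1 b ≤ a)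
    (hbr2mem : ∀ a, a ≤ Am → br2 a ≤ Am)
    (hbr2min : ∀ a, a ≤ Am → ∀ b, b ≤ Am → c2 (br2 a) a ≤ c2 b a)
    (hbr2least : ∀ a, a ≤ Am → ∀ b, b ≤ Am →
      (∀ b', b' ≤ Am → c2 b a ≤ c2 b' a) → br2 a ≤ b)
    (y : ℕ → ℕ × ℕ) (hy0 : y 0 = (0, 0))
    (hys : ∀ k, y (k + 1) = (br1 (y k).2, br2 (y k).1)) :
    -- the sequence is nondecreasing in the componentwise order
    (∀ k, (y k).1 ≤ (y (k + 1)).1 ∧ (y k).2 ≤ (y (k + 1)).2) ∧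
    -- and for every k ≥ 2·Am, y k is the least PSNE
    (∀ k, 2 * Am ≤ k →
      (y k).1 ≤ Am ∧ (y k).2 ≤ Am ∧
      (∀ a, a ≤ Am → c1 (y k).1 (y k).2 ≤ c1 a (y k).2) ∧
      (∀ b, b ≤ Am → c2 (y k).2 (y k).1 ≤ c2 b (y k).1) ∧
      (∀ a b : ℕ, a ≤ Am → b ≤ Am →
        (∀ a', a' ≤ Am → c1 a b ≤ c1 a' b) →
        (∀ b', b' ≤ Am → c2 b a ≤ c2 b' a) →
        (y k).1 ≤ a ∧ (y k).2 ≤ b)) := by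
  -- bounds
  have hbnd : ∀ k, (y k).1 ≤ Am ∧ (y k).2 ≤ Am := by
    intro k
    induction k with
    | zero => rw [hy0]; exact ⟨Nat.zero_le _, Nat.zero_le _⟩
    | succ k ih =>
      rw [hys k]
      exact ⟨hbr1mem _ ih.2, hbr2mem _ ih.1⟩
  -- monotonicity of br1
  have mono1 : ∀ b b', b ≤ Am → b' ≤ Am → b ≤ b' → br1 b ≤ br1 b' := by
    intro b b' hb hb' hbb
    rcases eq_or_lt_of_le hbb with rfl | hlt
    · exact le_refl _
    by_contra h
    push_neg at h
    -- br1 b' < br1 b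
    have h1 : c1 (br1 b) b ≤ c1 (br1 b') b := hbr1min b hb _ (hbr1mem b' hb')
    have h2 : c1 (br1 b') b' ≤ c1 (br1 b) b' := hbr1min b' hb' _ (hbr1mem b hb)
    rw [hc1, hc1] at h1 h2
    have key := cournot_helper w (ce1 (br1 b)) (ce1 (br1 b'))
      ((br1 b : ℝ) + 1) ((br1 b' : ℝ) + 1) ((b : ℝ) + 1) ((b' : ℝ) + 1)
      (by positivity) (by positivity)
      (by exact_mod_cast by omega) (by exact_mod_cast by omega) h1
    linarith
  -- monotonicity of br2
  have mono2 : ∀ a a', a ≤ Am → a' ≤ Am → a ≤ a' → br2 a ≤ br2 a' := by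
    intro a a' ha ha' haa
    rcases eq_or_lt_of_le haa with rfl | hlt
    · exact le_refl _
    by_contra h
    push_neg at h
    have h1 : c2 (br2 a) a ≤ c2 (br2 a') a := hbr2min a ha _ (hbr2mem a' ha')
    have h2 : c2 (br2 a') a' ≤ c2 (br2 a) a' := hbr2min a' ha' _ (hbr2mem a ha)
    rw [hc2, hc2] at h1 h2
    have key := cournot_helper w (ce2 (br2 a)) (ce2 (br2 a'))
      ((br2 a : ℝ) + 1) ((br2 a' : ℝ) + 1) ((a : ℝ) + 1) ((a' : ℝ) + 1)
      (by positivity) (by positivity)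
      (by exact_mod_cast by omega) (by exact_mod_cast by omega) h1
    linarith
  -- the sequence is nondecreasing
  have hmono : ∀ k, (y k).1 ≤ (y (k + 1)).1 ∧ (y k).2 ≤ (y (k + 1)).2 := by
    intro k
    induction k with
    | zero => rw [hy0]; exact ⟨Nat.zero_le _, Nat.zero_le _⟩
    | succ k ih =>
      constructor
      · rw [hys k, hys (k + 1)]
        exact mono1 _ _ (hbnd k).2 (hbnd (k + 1)).2 ih.2
      · rw [hys k, hys (k + 1)]
        exact mono2 _ _ (hbnd k).1 (hbnd (k + 1)).1 ih.1
  -- until fixation, the sum strictly increases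
  have hstep : ∀ k, y (k + 1) = y k ∨ (y k).1 + (y k).2 + 1 ≤ (y (k + 1)).1 + (y (k + 1)).2 := by
    intro k
    by_cases h : y (k + 1) = y k
    · exact Or.inl h
    · right
      have h1 := (hmono k).1
      have h2 := (hmono k).2
      have : (y k).1 ≠ (y (k + 1)).1 ∨ (y k).2 ≠ (y (k + 1)).2 := by
        by_contra hc
        push_neg at hc
        exact h (Prod.ext hc.1.symm hc.2.symm)
      omega
  -- there is a fixed point by time 2*Am
  have hfix : ∃ k0, k0 ≤ 2 * Am ∧ y (k0 + 1) = y k0 := by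
    by_contra h
    push_neg at h
    have hsum : ∀ k, k ≤ 2 * Am + 1 → k ≤ (y k).1 + (y k).2 := by
      intro k
      induction k with
      | zero => intro _; exact Nat.zero_le _
      | succ k ih =>
        intro hk
        have hk' : k ≤ 2 * Am := by omega
        have := h k hk'
        rcases hstep k with heq | hlt
        · exact absurd heq this
        · have := ih (by omega)
          omega
    have := hsum (2 * Am + 1) (le_refl _)
    have hb := hbnd (2 * Am + 1)
    omega
  obtain ⟨k0, hk0, hfx⟩ := hfix
  -- the sequence is constant from k0 on
  have hconst : ∀ j, y (k0 + j) = y k0 := by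
    intro j
    induction j with
    | zero => rfl
    | succ j ih =>
      have : k0 + (j + 1) = (k0 + j) + 1 := by omega
      rw [this, hys (k0 + j), ih, ← hys k0, hfx]
  -- leastness for all k
  have hleast : ∀ a b, a ≤ Am → b ≤ Am →
      (∀ a', a' ≤ Am → c1 a b ≤ c1 a' b) →
      (∀ b', b' ≤ Am → c2 b a ≤ c2 b' a) →
      ∀ k, (y k).1 ≤ a ∧ (y k).2 ≤ b := by
    intro a b ha hb hmina hminb k
    induction k with
    | zero => rw [hy0]; exact ⟨Nat.zero_le _, Nat.zero_le _⟩
    | succ k ih =>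
      rw [hys k]
      constructor
      · exact le_trans (mono1 _ _ (hbnd k).2 hb ih.2) (hbr1least b hb a ha hmina)
      · exact le_trans (mono2 _ _ (hbnd k).1 ha ih.1) (hbr2least a ha b hb hminb)
  refine ⟨hmono, ?_⟩
  intro k hk
  have hyk : y k = y k0 := by
    have : k = k0 + (k - k0) := by omega
    rw [this, hconst]
  have hfp : y k0 = (br1 (y k0).2, br2 (y k0).1) := hfx.symm.trans (hys k0)
  have h1 : (y k).1 = br1 (y k).2 := by
    rw [hyk]; exact congrArg Prod.fst hfp
  have h2 : (y k).2 = br2 (y k).1 := by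
    rw [hyk]; exact congrArg Prod.snd hfp
  refine ⟨(hbnd k).1, (hbnd k).2, ?_, ?_, ?_⟩
  · intro a ha
    rw [h1]
    exact hbr1min _ (hbnd k).2 a ha
  · intro b hb
    conv_lhs => rw [h2]
    exact hbr2min _ (hbnd k).1 b hb
  · intro a b ha hb hmina hminb
    exact hleast a b ha hb hmina hminb k
end

section
/- Fix a natural number Am, w > 0, and ce₁, ce₂ : ℕ → ℝ, with costs c₁(a,b) = w·ce₁(a) + (b+1)/(a+1) and c₂(b,a) = w·ce₂(b) + (a+1)/(b+1) on A = {0,…,Am}. If (a₀,b₀) is the least pure strategy Nash equilibrium and (ā,b̄) is the greatest pure strategy Nash equilibrium (componentwise order), then the least PSNE Pareto dominates the greatest: c₁(a₀,b₀) ≤ c₁(ā,b̄) and c₂(b₀,a₀) ≤ c₂(b̄,ā). -/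
/-- The least pure strategy Nash equilibrium Pareto dominates the greatest one:
both players incur lower costs at the least PSNE. -/
theorem least_psne_pareto_dominates_greatest (Am : ℕ) (w : ℝ) (hw : 0 < w)
    (ce1 ce2 : ℕ → ℝ) (c1 c2 : ℕ → ℕ → ℝ)
    (hc1 : ∀ a b : ℕ, c1 a b = w * ce1 a + ((b : ℝ) + 1) / ((a : ℝ) + 1))
    (hc2 : ∀ b a : ℕ, c2 b a = w * ce2 b + ((a : ℝ) + 1) / ((b : ℝ) + 1))
    (a0 b0 abar bbar : ℕ)
    -- (a0, b0) is the least PSNE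
    (ha0 : a0 ≤ Am) (hb0 : b0 ≤ Am)
    (h0nash1 : ∀ a, a ≤ Am → c1 a0 b0 ≤ c1 a b0)
    (h0nash2 : ∀ b, b ≤ Am → c2 b0 a0 ≤ c2 b a0)
    (h0least : ∀ a b : ℕ, a ≤ Am → b ≤ Am →
      (∀ a', a' ≤ Am → c1 a b ≤ c1 a' b) →
      (∀ b', b' ≤ Am → c2 b a ≤ c2 b' a) → a0 ≤ a ∧ b0 ≤ b)
    -- (abar, bbar) is the greatest PSNE
    (habar : abar ≤ Am) (hbbar : bbar ≤ Am)
    (hbnash1 : ∀ a, a ≤ Am → c1 abar bbar ≤ c1 a bbar)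
    (hbnash2 : ∀ b, b ≤ Am → c2 bbar abar ≤ c2 b abar)
    (hbgreatest : ∀ a b : ℕ, a ≤ Am → b ≤ Am →
      (∀ a', a' ≤ Am → c1 a b ≤ c1 a' b) →
      (∀ b', b' ≤ Am → c2 b a ≤ c2 b' a) → a ≤ abar ∧ b ≤ bbar) :
    c1 a0 b0 ≤ c1 abar bbar ∧ c2 b0 a0 ≤ c2 bbar abar := by
  obtain ⟨hab, hbb⟩ := h0least abar bbar habar hbbar hbnash1 hbnash2
  constructor
  · calc c1 a0 b0 ≤ c1 abar b0 := h0nash1 abar habar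
      _ ≤ c1 abar bbar := by
        rw [hc1, hc1]
        have h1 : (0:ℝ) < (abar:ℝ) + 1 := by positivity
        have h2 : ((b0:ℝ) + 1) ≤ (bbar:ℝ) + 1 := by
          have : (b0:ℝ) ≤ bbar := Nat.cast_le.mpr hbb
          linarith
        gcongr
  · calc c2 b0 a0 ≤ c2 bbar a0 := h0nash2 bbar hbbar
      _ ≤ c2 bbar abar := by
        rw [hc2, hc2]
        have h1 : (0:ℝ) < (bbar:ℝ) + 1 := by positivity
        have h2 : ((a0:ℝ) + 1) ≤ (abar:ℝ) + 1 := by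
          have : (a0:ℝ) ≤ abar := Nat.cast_le.mpr hab
          linarith
        gcongr
end

section
/- Fix a natural number Am, w > 0, and ce₁, ce₂ : ℕ → ℝ, with costs c₁(a,b) = w·ce₁(a) + (b+1)/(a+1) and c₂(b,a) = w·ce₂(b) + (a+1)/(b+1) on A = {0,…,Am}. If (a₀,b₀) is the least pure strategy Nash equilibrium, then (a₀,b₀) Pareto dominates every PSNE: for every PSNE (a,b), c₁(a₀,b₀) ≤ c₁(a,b) and c₂(b₀,a₀) ≤ c₂(b,a). -/
/-- The least pure strategy Nash equilibrium Pareto dominates every PSNE: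
both players incur at the least PSNE a cost no larger than at any PSNE. -/
theorem least_psne_pareto_dominates_all (Am : ℕ) (w : ℝ) (hw : 0 < w)
    (ce1 ce2 : ℕ → ℝ) (c1 c2 : ℕ → ℕ → ℝ)
    (hc1 : ∀ a b : ℕ, c1 a b = w * ce1 a + ((b : ℝ) + 1) / ((a : ℝ) + 1))
    (hc2 : ∀ b a : ℕ, c2 b a = w * ce2 b + ((a : ℝ) + 1) / ((b : ℝ) + 1))
    (a0 b0 : ℕ)
    -- (a0, b0) is the least PSNE
    (ha0 : a0 ≤ Am) (hb0 : b0 ≤ Am)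
    (h0nash1 : ∀ a, a ≤ Am → c1 a0 b0 ≤ c1 a b0)
    (h0nash2 : ∀ b, b ≤ Am → c2 b0 a0 ≤ c2 b a0)
    (h0least : ∀ a b : ℕ, a ≤ Am → b ≤ Am →
      (∀ a', a' ≤ Am → c1 a b ≤ c1 a' b) →
      (∀ b', b' ≤ Am → c2 b a ≤ c2 b' a) → a0 ≤ a ∧ b0 ≤ b) :
    ∀ a b : ℕ, a ≤ Am → b ≤ Am →
      (∀ a', a' ≤ Am → c1 a b ≤ c1 a' b) →
      (∀ b', b' ≤ Am → c2 b a ≤ c2 b' a) →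
      c1 a0 b0 ≤ c1 a b ∧ c2 b0 a0 ≤ c2 b a := by
  intro a b ha hb hnash1 hnash2
  obtain ⟨hle_a, hle_b⟩ := h0least a b ha hb hnash1 hnash2
  have hpa : (0:ℝ) < (a:ℝ) + 1 := by positivity
  have hpb : (0:ℝ) < (b:ℝ) + 1 := by positivity
  constructor
  · calc c1 a0 b0 ≤ c1 a b0 := h0nash1 a ha
      _ ≤ c1 a b := by
        rw [hc1, hc1]
        have : ((b0:ℝ) + 1) / ((a:ℝ) + 1) ≤ ((b:ℝ) + 1) / ((a:ℝ) + 1) := by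
          gcongr <;> exact_mod_cast hle_b
        linarith
  · calc c2 b0 a0 ≤ c2 b a0 := h0nash2 b hb
      _ ≤ c2 b a := by
        rw [hc2, hc2]
        have : ((a0:ℝ) + 1) / ((b:ℝ) + 1) ≤ ((a:ℝ) + 1) / ((b:ℝ) + 1) := by
          gcongr <;> exact_mod_cast hle_a
        linarith
end

section
/- Fix a natural number Am, w > 0, and ce : ℝ → ℕ → ℝ which is submodular in (γ,a) on (0,∞) × {0,…,Am}: for all 0 < γ⁻ ≤ γ⁺ and a⁻ ≤ a⁺ ≤ Am, ce(γ⁺,a⁻) + ce(γ⁻,a⁺) ≥ ce(γ⁻,a⁻) + ce(γ⁺,a⁺). Consider the symmetric-form game on A = {0,…,Am} where the player with SNR γ playing a against b has cost c(γ,a,b) = w·ce(γ,a) + (b+1)/(a+1). Then the greatest PSNE is nondecreasing in the SNR vector: for 0 < γ₁⁻ ≤ γ₁⁺ and 0 < γ₂⁻ ≤ γ₂⁺, if (ā⁻,b̄⁻) is the greatest PSNE at (γ₁⁻,γ₂⁻) and (ā⁺,b̄⁺) is the greatest PSNE at (γ₁⁺,γ₂⁺), then ā⁻ ≤ ā⁺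 and b̄⁻ ≤ b̄⁺. -/
/-- Key monotone-comparative-statics lemma: if `aqm` is a best response at the lower
parameter `(gm, bqm)` and `aq` is a best response at the higher parameter `(gp, bqp)`,
then `max aqm aq` is also a best response at `(gp, bqp)`. -/
lemma psne_key (Am : ℕ) (w : ℝ) (hw : 0 < w)
    (ce : ℝ → ℕ → ℝ)
    (hsub : ∀ (gm gp : ℝ) (am ap : ℕ), 0 < gm → gm ≤ gp → am ≤ ap → ap ≤ Am →
      ce gm am + ce gp ap ≤ ce gp am + ce gm ap)
    (c : ℝ → ℕ → ℕ → ℝ)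
    (hc : ∀ (γ : ℝ) (a b : ℕ),
      c γ a b = w * ce γ a + ((b : ℝ) + 1) / ((a : ℝ) + 1))
    (gm gp : ℝ) (bqm bqp aqm aq : ℕ)
    (hgm : 0 < gm) (hg : gm ≤ gp) (hb : bqm ≤ bqp)
    (haqmA : aqm ≤ Am) (haqA : aq ≤ Am)
    (hBRm : ∀ a', a' ≤ Am → c gm aqm bqm ≤ c gm a' bqm)
    (hBRp : ∀ a', a' ≤ Am → c gp aq bqp ≤ c gp a' bqp) :
    ∀ a', a' ≤ Am → c gp (max aqm aq) bqp ≤ c gp a' bqp := by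
  intro a' ha'
  rcases le_total aqm aq with h | h
  · rw [max_eq_right h]; exact hBRp a' ha'
  · rw [max_eq_left h]
    refine le_trans ?_ (hBRp a' ha')
    have hBR := hBRm aq haqA
    rw [hc, hc] at hBR
    rw [hc, hc]
    have hs := hsub gm gp aq aqm hgm hg h haqmA
    have hws : w * (ce gm aq + ce gp aqm) ≤ w * (ce gp aq + ce gm aqm) :=
      mul_le_mul_of_nonneg_left hs hw.le
    have hA : (0:ℝ) < (aq:ℝ)+1 := by positivity
    have hB : (0:ℝ) < (aqm:ℝ)+1 := by positivity
    have hle : (aq:ℝ) + 1 ≤ (aqm:ℝ) + 1 := by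
      have : (aq:ℝ) ≤ aqm := by exact_mod_cast h
      linarith
    have hinv : 1/((aqm:ℝ)+1) ≤ 1/((aq:ℝ)+1) := one_div_le_one_div_of_le hA hle
    have hbb : (bqm:ℝ) ≤ bqp := by exact_mod_cast hb
    have hprod : 0 ≤ ((bqp:ℝ) - bqm) * (1/((aq:ℝ)+1) - 1/((aqm:ℝ)+1)) :=
      mul_nonneg (by linarith) (by linarith)
    have e1 : ((bqp:ℝ)+1)/((aqm:ℝ)+1) = ((bqp:ℝ)+1)*(1/((aqm:ℝ)+1)) := by ring
    have e2 : ((bqp:ℝ)+1)/((aq:ℝ)+1) = ((bqp:ℝ)+1)*(1/((aq:ℝ)+1)) := by ring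
    have e3 : ((bqm:ℝ)+1)/((aqm:ℝ)+1) = ((bqm:ℝ)+1)*(1/((aqm:ℝ)+1)) := by ring
    have e4 : ((bqm:ℝ)+1)/((aq:ℝ)+1) = ((bqm:ℝ)+1)*(1/((aq:ℝ)+1)) := by ring
    rw [e1, e2]
    rw [e3, e4] at hBR
    nlinarith [hws, hBR, hprod]

/-- If the error cost `ce` is submodular in `(γ,a)` on `(0,∞) × {0,…,Am}`,
then the greatest PSNE of the symmetric-form game is nondecreasing in the SNR
vector `(γ₁,γ₂)`. -/
theorem greatest_psne_monotone (Am : ℕ) (w : ℝ) (hw : 0 < w)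
    (ce : ℝ → ℕ → ℝ)
    (hsub : ∀ (gm gp : ℝ) (am ap : ℕ), 0 < gm → gm ≤ gp → am ≤ ap → ap ≤ Am →
      ce gm am + ce gp ap ≤ ce gp am + ce gm ap)
    (c : ℝ → ℕ → ℕ → ℝ)
    (hc : ∀ (γ : ℝ) (a b : ℕ),
      c γ a b = w * ce γ a + ((b : ℝ) + 1) / ((a : ℝ) + 1))
    (γ1m γ1p γ2m γ2p : ℝ)
    (hγ1m : 0 < γ1m) (hγ1 : γ1m ≤ γ1p) (hγ2m : 0 < γ2m) (hγ2 : γ2m ≤ γ2p)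
    (am bm ap bp : ℕ)
    -- (am, bm) is the greatest PSNE at (γ1m, γ2m)
    (hamA : am ≤ Am) (hbmA : bm ≤ Am)
    (hmnash1 : ∀ a, a ≤ Am → c γ1m am bm ≤ c γ1m a bm)
    (hmnash2 : ∀ b, b ≤ Am → c γ2m bm am ≤ c γ2m b am)
    (hmgreatest : ∀ a b : ℕ, a ≤ Am → b ≤ Am →
      (∀ a', a' ≤ Am → c γ1m a b ≤ c γ1m a' b) →
      (∀ b', b' ≤ Am → c γ2m b a ≤ c γ2m b' a) → a ≤ am ∧ b ≤ bm)
    -- (ap, bp) is the greatest PSNE at (γ1p, γ2p)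
    (hapA : ap ≤ Am) (hbpA : bp ≤ Am)
    (hpnash1 : ∀ a, a ≤ Am → c γ1p ap bp ≤ c γ1p a bp)
    (hpnash2 : ∀ b, b ≤ Am → c γ2p bp ap ≤ c γ2p b ap)
    (hpgreatest : ∀ a b : ℕ, a ≤ Am → b ≤ Am →
      (∀ a', a' ≤ Am → c γ1p a b ≤ c γ1p a' b) →
      (∀ b', b' ≤ Am → c γ2p b a ≤ c γ2p b' a) → a ≤ ap ∧ b ≤ bp) :
    am ≤ ap ∧ bm ≤ bp := by
  have hγ1p : 0 < γ1p := lt_of_lt_of_le hγ1m hγ1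
  have hγ2p : 0 < γ2p := lt_of_lt_of_le hγ2m hγ2
  -- existence of a best response (finite action set)
  have exBR : ∀ (g : ℝ) (b : ℕ), ∃ a, a ≤ Am ∧ ∀ a', a' ≤ Am → c g a b ≤ c g a' b := by
    intro g b
    obtain ⟨a, haMem, haMin⟩ := Finset.exists_min_image (Finset.range (Am+1))
      (fun x => c g x b) ⟨0, Finset.mem_range.2 (Nat.succ_pos _)⟩
    exact ⟨a, Nat.lt_succ_iff.1 (Finset.mem_range.1 haMem),
      fun a' ha' => haMin a' (Finset.mem_range.2 (Nat.lt_succ_of_le ha'))⟩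
  have key := psne_key Am w hw ce hsub c hc
  -- upward best-response iteration at the high parameter
  have iter : ∀ k, ∀ a b : ℕ, a ≤ Am → b ≤ Am → 2*Am - (a+b) < k →
      (∃ b0, b0 ≤ b ∧ ∀ a', a' ≤ Am → c γ1p a b0 ≤ c γ1p a' b0) →
      (∃ a0, a0 ≤ a ∧ ∀ b', b' ≤ Am → c γ2p b a0 ≤ c γ2p b' a0) →
      ∃ a' b', a ≤ a' ∧ b ≤ b' ∧ a' ≤ Am ∧ b' ≤ Am ∧
        (∀ x, x ≤ Am → c γ1p a' b' ≤ c γ1p x b') ∧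
        (∀ x, x ≤ Am → c γ2p b' a' ≤ c γ2p x a') := by
    intro k
    induction k with
    | zero => intro a b _ _ hlt; omega
    | succ k ih =>
      rintro a b haA hbA hlt ⟨b0, hb0, hBRa⟩ ⟨a0, ha0, hBRb⟩
      obtain ⟨a1, ha1A, ha1BR⟩ := exBR γ1p b
      have hA' : ∀ x, x ≤ Am → c γ1p (max a a1) b ≤ c γ1p x b :=
        key γ1p γ1p b0 b a a1 hγ1p le_rfl hb0 haA ha1A hBRa ha1BR
      obtain ⟨b1, hb1A, hb1BR⟩ := exBR γ2p (max a a1)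
      have hB' : ∀ x, x ≤ Am → c γ2p (max b b1) (max a a1) ≤ c γ2p x (max a a1) :=
        key γ2p γ2p a0 (max a a1) b b1 hγ2p le_rfl
          (le_trans ha0 (le_max_left _ _)) hbA hb1A hBRb hb1BR
      have haA' : max a a1 ≤ Am := max_le haA ha1A
      have hbA' : max b b1 ≤ Am := max_le hbA hb1A
      by_cases hfix : max a a1 = a ∧ max b b1 = b
      · refine ⟨a, b, le_rfl, le_rfl, haA, hbA, ?_, ?_⟩
        · intro x hx; have := hA' x hx; rwa [hfix.1] at this
        · intro x hx; have := hB' x hx; rwa [hfix.1, hfix.2] at this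
      · have hlt' : 2*Am - (max a a1 + max b b1) < k := by
          have h1 : a ≤ max a a1 := le_max_left _ _
          have h2 : b ≤ max b b1 := le_max_left _ _
          have : a < max a a1 ∨ b < max b b1 := by
            rcases Nat.lt_or_ge a (max a a1) with h | h
            · exact Or.inl h
            · right
              have hea : max a a1 = a := le_antisymm h h1
              rcases Nat.lt_or_ge b (max b b1) with h' | h'
              · exact h'
              · exact absurd ⟨hea, le_antisymm h' h2⟩ hfix
          omega
        obtain ⟨a', b', h1, h2, h3, h4, h5, h6⟩ := ih (max a a1) (max b b1) haA' hbA' hlt'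
          ⟨b, le_max_left _ _, hA'⟩ ⟨max a a1, le_rfl, hB'⟩
        exact ⟨a', b', le_trans (le_max_left _ _) h1, le_trans (le_max_left _ _) h2,
          h3, h4, h5, h6⟩
  -- initial step: move from the low-parameter PSNE up to best responses at the high parameter
  obtain ⟨a1, ha1A, ha1BR⟩ := exBR γ1p bm
  have hAstart : ∀ x, x ≤ Am → c γ1p (max am a1) bm ≤ c γ1p x bm :=
    key γ1m γ1p bm bm am a1 hγ1m hγ1 le_rfl hamA ha1A hmnash1 ha1BR
  have hastA : max am a1 ≤ Am := max_le hamA ha1A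
  obtain ⟨b1, hb1A, hb1BR⟩ := exBR γ2p (max am a1)
  have hBstart : ∀ x, x ≤ Am → c γ2p (max bm b1) (max am a1) ≤ c γ2p x (max am a1) :=
    key γ2m γ2p am (max am a1) bm b1 hγ2m hγ2 (le_max_left _ _) hbmA hb1A hmnash2 hb1BR
  have hbstA : max bm b1 ≤ Am := max_le hbmA hb1A
  obtain ⟨a', b', h1, h2, h3, h4, h5, h6⟩ :=
    iter (2*Am + 1) (max am a1) (max bm b1) hastA hbstA (by omega)
      ⟨bm, le_max_left _ _, hAstart⟩ ⟨max am a1, le_rfl, hBstart⟩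
  obtain ⟨hap', hbp'⟩ := hpgreatest a' b' h3 h4 h5 h6
  exact ⟨le_trans (le_trans (le_max_left _ _) h1) hap',
    le_trans (le_trans (le_max_left _ _) h2) hbp'⟩
end

section
/- Let P₀ be real with 0 < P₀ ≤ 1/5, fix a natural number Am and w > 0, and define ce(γ,a) = (−log(5·P₀))·(2^a − 1)/(1.5·γ) for γ > 0 and natural a. Consider the symmetric-form game on A = {0,…,Am} where the player with SNR γ playing a against b has cost c(γ,a,b) = w·ce(γ,a) + (b+1)/(a+1). Then both extremal PSNEs are nondecreasing in the SNR vector: for 0 < γ₁⁻ ≤ γ₁⁺ and 0 < γ₂⁻ ≤ γ₂⁺, the greatest PSNE at (γ₁⁻,γ₂⁻) is componentwise ≤ the greatest PSNE at (γ₁⁺,γ₂⁺), and the least PSNE at (γ₁⁻,γ₂⁻) is componentwise ≤ the least PSNE at (γ₁⁺,γ₂⁺). -/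
/-- On `{0,…,Am}` every one-dimensional cost has a greatest minimizer. -/
lemma exists_greatest_br (Am : ℕ) (g : ℕ → ℕ → ℝ) (b : ℕ) :
    ∃ m, m ≤ Am ∧ (∀ a', a' ≤ Am → g m b ≤ g a' b) ∧
      ∀ a, a ≤ Am → (∀ a', a' ≤ Am → g a b ≤ g a' b) → a ≤ m := by
  classical
  have hne : ((Finset.range (Am+1)).filter
      (fun a => ∀ a', a' ≤ Am → g a b ≤ g a' b)).Nonempty := by
    obtain ⟨m, hm, hmin⟩ := Finset.exists_min_image (Finset.range (Am+1))
      (fun a => g a b) ⟨0, by simp⟩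
    refine ⟨m, ?_⟩
    simp only [Finset.mem_filter, Finset.mem_range] at hm ⊢
    exact ⟨hm, fun a' ha' => hmin a' (Finset.mem_range.2 (Nat.lt_succ_of_le ha'))⟩
  have hmem := Finset.max'_mem _ hne
  simp only [Finset.mem_filter, Finset.mem_range] at hmem
  refine ⟨_, by omega, hmem.2, ?_⟩
  intro a ha hmin
  exact Finset.le_max' _ a (by
    simp only [Finset.mem_filter, Finset.mem_range]
    exact ⟨Nat.lt_succ_of_le ha, hmin⟩)

/-- Cross single-crossing step. -/
lemma le_greatest_br {Am : ℕ} {f g : ℕ → ℕ → ℝ}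
    (hdd : ∀ a' a b b' : ℕ, a' ≤ a → b ≤ b' → g a b' - g a' b' ≤ f a b - f a' b)
    {a b b' m : ℕ} (ha : a ≤ Am) (hbb : b ≤ b')
    (hf : ∀ a'', a'' ≤ Am → f a b ≤ f a'' b)
    (hm : m ≤ Am) (hmbr : ∀ a'', a'' ≤ Am → g m b' ≤ g a'' b')
    (hgrt : ∀ x, x ≤ Am → (∀ a'', a'' ≤ Am → g x b' ≤ g a'' b') → x ≤ m) :
    a ≤ m := by
  by_cases h : a ≤ m
  · exact h
  · push_neg at h
    apply hgrt a ha
    intro a'' ha''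
    have h1 := hf m hm
    have h2 := hdd m a b b' h.le hbb
    have h3 := hmbr a'' ha''
    linarith




/-- Abstract comparative statics: any PSNE of the "low" game `(f1,f2)` lies
(componentwise) below the greatest PSNE of the "high" game `(g1,g2)`. -/
lemma aux_greatest (Am : ℕ) (f1 f2 g1 g2 : ℕ → ℕ → ℝ)
    (h1 : ∀ a' a b b' : ℕ, a' ≤ a → b ≤ b' → g1 a b' - g1 a' b' ≤ f1 a b - f1 a' b)
    (h2 : ∀ a' a b b' : ℕ, a' ≤ a → b ≤ b' → g2 a b' - g2 a' b' ≤ f2 a b - f2 a' b)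
    (hg1 : ∀ a' a b b' : ℕ, a' ≤ a → b ≤ b' → g1 a b' - g1 a' b' ≤ g1 a b - g1 a' b)
    (hg2 : ∀ a' a b b' : ℕ, a' ≤ a → b ≤ b' → g2 a b' - g2 a' b' ≤ g2 a b - g2 a' b)
    (abar bbar A B : ℕ) (habar : abar ≤ Am) (hbbar : bbar ≤ Am)
    (hn1 : ∀ a, a ≤ Am → f1 abar bbar ≤ f1 a bbar)
    (hn2 : ∀ b, b ≤ Am → f2 bbar abar ≤ f2 b abar)
    (hgreat : ∀ a b, a ≤ Am → b ≤ Am → (∀ a', a' ≤ Am → g1 a b ≤ g1 a' b) →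
      (∀ b', b' ≤ Am → g2 b a ≤ g2 b' a) → a ≤ A ∧ b ≤ B) :
    abar ≤ A ∧ bbar ≤ B := by
  choose br hbr1 hbr2 hbr3 using fun (g : ℕ → ℕ → ℝ) (b : ℕ) => exists_greatest_br Am g b
  set p : ℕ → ℕ × ℕ :=
    fun n => Nat.rec (abar, bbar) (fun _ q => (br g1 q.2, br g2 q.1)) n with hp
  have hps : ∀ n, p (n+1) = (br g1 (p n).2, br g2 (p n).1) := fun n => rfl
  have hbound : ∀ n, (p n).1 ≤ Am ∧ (p n).2 ≤ Am := by
    intro n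
    cases n with
    | zero => exact ⟨habar, hbbar⟩
    | succ n => rw [hps]; exact ⟨hbr1 g1 _, hbr1 g2 _⟩
  have hmono : ∀ n, (p n).1 ≤ (p (n+1)).1 ∧ (p n).2 ≤ (p (n+1)).2 := by
    intro n
    induction n with
    | zero =>
      rw [hps]
      exact ⟨le_greatest_br h1 habar le_rfl hn1 (hbr1 g1 bbar) (hbr2 g1 bbar) (hbr3 g1 bbar),
        le_greatest_br h2 hbbar le_rfl hn2 (hbr1 g2 abar) (hbr2 g2 abar) (hbr3 g2 abar)⟩
    | succ n ih =>
      rw [hps n, hps (n+1)]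
      exact ⟨le_greatest_br hg1 (hbr1 g1 _) ih.2 (hbr2 g1 _) (hbr1 g1 _) (hbr2 g1 _) (hbr3 g1 _),
        le_greatest_br hg2 (hbr1 g2 _) ih.1 (hbr2 g2 _) (hbr1 g2 _) (hbr2 g2 _) (hbr3 g2 _)⟩
  have key : ∃ n, (p n).1 = (p (n+1)).1 ∧ (p n).2 = (p (n+1)).2 := by
    by_contra hcon
    push_neg at hcon
    have hstrict : ∀ n, (p n).1 + (p n).2 < (p (n+1)).1 + (p (n+1)).2 := by
      intro n
      have h := hmono n
      have h' := hcon n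
      by_cases he : (p n).1 = (p (n+1)).1
      · have := h' he; omega
      · omega
    have hsm : StrictMono (fun n => (p n).1 + (p n).2) := strictMono_nat_of_lt_succ hstrict
    have hle : 2*Am+1 ≤ (p (2*Am+1)).1 + (p (2*Am+1)).2 := hsm.le_apply
    have hb := hbound (2*Am+1)
    omega
  obtain ⟨n, hx, hy⟩ := key
  have e1 : (p n).1 = br g1 (p n).2 := by rw [hx, hps]
  have e2 : (p n).2 = br g2 (p n).1 := by rw [hy, hps]
  have hfix1 : ∀ a', a' ≤ Am → g1 (p n).1 (p n).2 ≤ g1 a' (p n).2 := by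
    rw [e1]; exact hbr2 g1 (p n).2
  have hfix2 : ∀ b', b' ≤ Am → g2 (p n).2 (p n).1 ≤ g2 b' (p n).1 := by
    rw [e2]; exact hbr2 g2 (p n).1
  obtain ⟨hA', hB'⟩ := hgreat (p n).1 (p n).2 (hbound n).1 (hbound n).2 hfix1 hfix2
  have hstart : ∀ m, abar ≤ (p m).1 ∧ bbar ≤ (p m).2 := by
    intro m
    induction m with
    | zero => exact ⟨le_rfl, le_rfl⟩
    | succ m ih => exact ⟨le_trans ih.1 (hmono m).1, le_trans ih.2 (hmono m).2⟩
  exact ⟨le_trans (hstart n).1 hA', le_trans (hstart n).2 hB'⟩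


/-- Decreasing differences of the cost in the action against (SNR, opponent action). -/
lemma dd_key (P0 w : ℝ) (hP0 : 0 < P0) (hP0' : P0 ≤ 1/5) (hw : 0 < w)
    (c : ℝ → ℕ → ℕ → ℝ)
    (hkey : ∀ (γ : ℝ) (a b : ℕ), c γ a b =
      w * ((-Real.log (5 * P0)) * ((2 : ℝ) ^ a - 1) / (1.5 * γ)) + ((b : ℝ) + 1) / ((a : ℝ) + 1))
    (γ γ' : ℝ) (hγ : 0 < γ) (hle : γ ≤ γ') :
    ∀ a' a b b' : ℕ, a' ≤ a → b ≤ b' →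
      c γ' a b' - c γ' a' b' ≤ c γ a b - c γ a' b := by
  intro a' a b b' haa hbb
  have hγ' : 0 < γ' := lt_of_lt_of_le hγ hle
  have hK : 0 ≤ -Real.log (5 * P0) := by
    have h1 : 5 * P0 ≤ 1 := by linarith
    have := Real.log_nonpos (by linarith) h1
    linarith
  have h2 : (2:ℝ)^a' ≤ (2:ℝ)^a := by
    apply pow_le_pow_right₀ (by norm_num) haa
  have hca : ((a':ℝ)+1) ≤ ((a:ℝ)+1) := by
    have : (a':ℝ) ≤ a := Nat.cast_le.2 haa; linarith
  have hcb : ((b:ℝ)+1) ≤ ((b':ℝ)+1) := by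
    have : (b:ℝ) ≤ b' := Nat.cast_le.2 hbb; linarith
  have ha'pos : (0:ℝ) < (a':ℝ)+1 := by positivity
  have hia : (1:ℝ)/((a:ℝ)+1) ≤ 1/((a':ℝ)+1) := one_div_le_one_div_of_le ha'pos hca
  have hig : 1/(1.5*γ') ≤ 1/(1.5*γ) := one_div_le_one_div_of_le (by positivity) (by nlinarith)
  rw [hkey, hkey, hkey, hkey]
  have hKX : 0 ≤ w * ((-Real.log (5 * P0)) * ((2:ℝ)^a - (2:ℝ)^a')) :=
    mul_nonneg hw.le (mul_nonneg hK (by linarith))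
  have m1 := mul_le_mul_of_nonneg_left hig hKX
  have hneg : (1:ℝ)/((a:ℝ)+1) - 1/((a':ℝ)+1) ≤ 0 := by linarith
  have m2 := mul_le_mul_of_nonpos_right hcb hneg
  set K := -Real.log (5 * P0) with hKdef
  have e1 : w * (K * ((2:ℝ)^a - 1) / (1.5*γ')) - w * (K * ((2:ℝ)^a' - 1) / (1.5*γ'))
      = (w * (K * ((2:ℝ)^a - (2:ℝ)^a'))) * (1/(1.5*γ')) := by
    field_simp
    ring
  have e2 : w * (K * ((2:ℝ)^a - 1) / (1.5*γ)) - w * (K * ((2:ℝ)^a' - 1) / (1.5*γ))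
      = (w * (K * ((2:ℝ)^a - (2:ℝ)^a'))) * (1/(1.5*γ)) := by
    field_simp
    ring
  have e3 : ((b':ℝ)+1)/((a:ℝ)+1) - ((b':ℝ)+1)/((a':ℝ)+1)
      = ((b':ℝ)+1) * (1/((a:ℝ)+1) - 1/((a':ℝ)+1)) := by ring
  have e4 : ((b:ℝ)+1)/((a:ℝ)+1) - ((b:ℝ)+1)/((a':ℝ)+1)
      = ((b:ℝ)+1) * (1/((a:ℝ)+1) - 1/((a':ℝ)+1)) := by ring
  linarith




/-- With the minimal symbol-power error cost
`ce(γ,a) = (−ln(5·P₀))·(2^a − 1)/(1.5·γ)`, both extremal PSNEs of the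
symmetric-form adaptive-modulation game are nondecreasing in the SNR vector. -/
theorem extremal_psne_monotone_power_cost (P0 : ℝ) (hP0 : 0 < P0)
    (hP0' : P0 ≤ 1 / 5) (Am : ℕ) (w : ℝ) (hw : 0 < w)
    (ce : ℝ → ℕ → ℝ)
    (hce : ∀ (γ : ℝ) (a : ℕ),
      ce γ a = (-Real.log (5 * P0)) * ((2 : ℝ) ^ a - 1) / (1.5 * γ))
    (c : ℝ → ℕ → ℕ → ℝ)
    (hc : ∀ (γ : ℝ) (a b : ℕ),
      c γ a b = w * ce γ a + ((b : ℝ) + 1) / ((a : ℝ) + 1))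
    (γ1m γ1p γ2m γ2p : ℝ)
    (hγ1m : 0 < γ1m) (hγ1 : γ1m ≤ γ1p) (hγ2m : 0 < γ2m) (hγ2 : γ2m ≤ γ2p)
    (abarm bbarm abarp bbarp a0m b0m a0p b0p : ℕ)
    -- (abarm, bbarm) is the greatest PSNE at (γ1m, γ2m)
    (habarm : abarm ≤ Am) (hbbarm : bbarm ≤ Am)
    (hgmnash1 : ∀ a, a ≤ Am → c γ1m abarm bbarm ≤ c γ1m a bbarm)
    (hgmnash2 : ∀ b, b ≤ Am → c γ2m bbarm abarm ≤ c γ2m b abarm)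
    (hgm : ∀ a b : ℕ, a ≤ Am → b ≤ Am →
      (∀ a', a' ≤ Am → c γ1m a b ≤ c γ1m a' b) →
      (∀ b', b' ≤ Am → c γ2m b a ≤ c γ2m b' a) → a ≤ abarm ∧ b ≤ bbarm)
    -- (abarp, bbarp) is the greatest PSNE at (γ1p, γ2p)
    (habarp : abarp ≤ Am) (hbbarp : bbarp ≤ Am)
    (hgpnash1 : ∀ a, a ≤ Am → c γ1p abarp bbarp ≤ c γ1p a bbarp)
    (hgpnash2 : ∀ b, b ≤ Am → c γ2p bbarp abarp ≤ c γ2p b abarp)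
    (hgp : ∀ a b : ℕ, a ≤ Am → b ≤ Am →
      (∀ a', a' ≤ Am → c γ1p a b ≤ c γ1p a' b) →
      (∀ b', b' ≤ Am → c γ2p b a ≤ c γ2p b' a) → a ≤ abarp ∧ b ≤ bbarp)
    -- (a0m, b0m) is the least PSNE at (γ1m, γ2m)
    (ha0m : a0m ≤ Am) (hb0m : b0m ≤ Am)
    (hlmnash1 : ∀ a, a ≤ Am → c γ1m a0m b0m ≤ c γ1m a b0m)
    (hlmnash2 : ∀ b, b ≤ Am → c γ2m b0m a0m ≤ c γ2m b a0m)
    (hlm : ∀ a b : ℕ, a ≤ Am → b ≤ Am →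
      (∀ a', a' ≤ Am → c γ1m a b ≤ c γ1m a' b) →
      (∀ b', b' ≤ Am → c γ2m b a ≤ c γ2m b' a) → a0m ≤ a ∧ b0m ≤ b)
    -- (a0p, b0p) is the least PSNE at (γ1p, γ2p)
    (ha0p : a0p ≤ Am) (hb0p : b0p ≤ Am)
    (hlpnash1 : ∀ a, a ≤ Am → c γ1p a0p b0p ≤ c γ1p a b0p)
    (hlpnash2 : ∀ b, b ≤ Am → c γ2p b0p a0p ≤ c γ2p b a0p)
    (hlp : ∀ a b : ℕ, a ≤ Am → b ≤ Am →
      (∀ a', a' ≤ Am → c γ1p a b ≤ c γ1p a' b) →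
      (∀ b', b' ≤ Am → c γ2p b a ≤ c γ2p b' a) → a0p ≤ a ∧ b0p ≤ b) :
    (abarm ≤ abarp ∧ bbarm ≤ bbarp) ∧ (a0m ≤ a0p ∧ b0m ≤ b0p) := by
  have hkey : ∀ (γ : ℝ) (a b : ℕ), c γ a b =
      w * ((-Real.log (5 * P0)) * ((2 : ℝ) ^ a - 1) / (1.5 * γ)) + ((b : ℝ) + 1) / ((a : ℝ) + 1) :=
    fun γ a b => by rw [hc, hce]
  have dd1p := dd_key P0 w hP0 hP0' hw c hkey γ1m γ1p hγ1m hγ1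
  have dd1pp := dd_key P0 w hP0 hP0' hw c hkey γ1p γ1p (hγ1m.trans_le hγ1) le_rfl
  have dd2p := dd_key P0 w hP0 hP0' hw c hkey γ2m γ2p hγ2m hγ2
  have dd2pp := dd_key P0 w hP0 hP0' hw c hkey γ2p γ2p (hγ2m.trans_le hγ2) le_rfl
  have dd1mm := dd_key P0 w hP0 hP0' hw c hkey γ1m γ1m hγ1m le_rfl
  have dd2mm := dd_key P0 w hP0 hP0' hw c hkey γ2m γ2m hγ2m le_rfl
  have part1 : abarm ≤ abarp ∧ bbarm ≤ bbarp :=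
    aux_greatest Am (fun a b => c γ1m a b) (fun a b => c γ2m a b)
      (fun a b => c γ1p a b) (fun a b => c γ2p a b) dd1p dd2p dd1pp dd2pp
      abarm bbarm abarp bbarp habarm hbbarm hgmnash1 hgmnash2 hgp
  -- dual game for the least equilibria
  have ddd1 : ∀ a' a b b' : ℕ, a' ≤ a → b ≤ b' →
      c γ1m (Am-a) (Am-b') - c γ1m (Am-a') (Am-b') ≤ c γ1p (Am-a) (Am-b) - c γ1p (Am-a') (Am-b) := by
    intro a' a b b' haa hbb
    have := dd1p (Am-a) (Am-a') (Am-b') (Am-b) (Nat.sub_le_sub_left haa Am) (Nat.sub_le_sub_left hbb Am)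
    linarith
  have ddd2 : ∀ a' a b b' : ℕ, a' ≤ a → b ≤ b' →
      c γ2m (Am-a) (Am-b') - c γ2m (Am-a') (Am-b') ≤ c γ2p (Am-a) (Am-b) - c γ2p (Am-a') (Am-b) := by
    intro a' a b b' haa hbb
    have := dd2p (Am-a) (Am-a') (Am-b') (Am-b) (Nat.sub_le_sub_left haa Am) (Nat.sub_le_sub_left hbb Am)
    linarith
  have dddg1 : ∀ a' a b b' : ℕ, a' ≤ a → b ≤ b' →
      c γ1m (Am-a) (Am-b') - c γ1m (Am-a') (Am-b') ≤ c γ1m (Am-a) (Am-b) - c γ1m (Am-a') (Am-b) := by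
    intro a' a b b' haa hbb
    have := dd1mm (Am-a) (Am-a') (Am-b') (Am-b) (Nat.sub_le_sub_left haa Am) (Nat.sub_le_sub_left hbb Am)
    linarith
  have dddg2 : ∀ a' a b b' : ℕ, a' ≤ a → b ≤ b' →
      c γ2m (Am-a) (Am-b') - c γ2m (Am-a') (Am-b') ≤ c γ2m (Am-a) (Am-b) - c γ2m (Am-a') (Am-b) := by
    intro a' a b b' haa hbb
    have := dd2mm (Am-a) (Am-a') (Am-b') (Am-b) (Nat.sub_le_sub_left haa Am) (Nat.sub_le_sub_left hbb Am)
    linarith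
  have hdn1 : ∀ a, a ≤ Am →
      c γ1p (Am-(Am-a0p)) (Am-(Am-b0p)) ≤ c γ1p (Am-a) (Am-(Am-b0p)) := by
    intro a ha
    rw [Nat.sub_sub_self ha0p, Nat.sub_sub_self hb0p]
    exact hlpnash1 (Am-a) (Nat.sub_le Am a)
  have hdn2 : ∀ b, b ≤ Am →
      c γ2p (Am-(Am-b0p)) (Am-(Am-a0p)) ≤ c γ2p (Am-b) (Am-(Am-a0p)) := by
    intro b hb
    rw [Nat.sub_sub_self ha0p, Nat.sub_sub_self hb0p]
    exact hlpnash2 (Am-b) (Nat.sub_le Am b)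
  have hdgreat : ∀ a b, a ≤ Am → b ≤ Am →
      (∀ a', a' ≤ Am → c γ1m (Am-a) (Am-b) ≤ c γ1m (Am-a') (Am-b)) →
      (∀ b', b' ≤ Am → c γ2m (Am-b) (Am-a) ≤ c γ2m (Am-b') (Am-a)) →
      a ≤ Am - a0m ∧ b ≤ Am - b0m := by
    intro a b ha hb hna hnb
    have hn1' : ∀ a', a' ≤ Am → c γ1m (Am-a) (Am-b) ≤ c γ1m a' (Am-b) := by
      intro a' ha'
      have := hna (Am-a') (Nat.sub_le Am a')
      rwa [Nat.sub_sub_self ha'] at this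
    have hn2' : ∀ b', b' ≤ Am → c γ2m (Am-b) (Am-a) ≤ c γ2m b' (Am-a) := by
      intro b' hb'
      have := hnb (Am-b') (Nat.sub_le Am b')
      rwa [Nat.sub_sub_self hb'] at this
    have := hlm (Am-a) (Am-b) (Nat.sub_le Am a) (Nat.sub_le Am b) hn1' hn2'
    omega
  have part2 : Am - a0p ≤ Am - a0m ∧ Am - b0p ≤ Am - b0m :=
    aux_greatest Am (fun a b => c γ1p (Am-a) (Am-b)) (fun a b => c γ2p (Am-a) (Am-b))
      (fun a b => c γ1m (Am-a) (Am-b)) (fun a b => c γ2m (Am-a) (Am-b))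
      ddd1 ddd2 dddg1 dddg2 (Am-a0p) (Am-b0p) (Am-a0m) (Am-b0m)
      (Nat.sub_le _ _) (Nat.sub_le _ _) hdn1 hdn2 hdgreat
  obtain ⟨p1, p2⟩ := part2
  exact ⟨part1, by omega, by omega⟩
end
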